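/- arXiv:2506.23211 — 12 statements merged into one kernel-verified Lean document; each statement's English description precedes it below -/
import Mathlib

section
/- With the setup of a reductive decomposition g = h ⊕ m and a 2-cocycle symplectic tensor ω on m, the operator L^{a,b}_x is skew-symmetric with respect to ω for all x ∈ m (i.e., ω(L^{a,b}_x(y), z) = −ω(y, L^{a,b}_x(z)) for all x,y,z) if a = b. Conversely, if [m,m]_m ≠ 0 (G/H not locally symmetric in the sense that the m-component of brackets is nonzero for some pair), skew-symmetry for all x forces a = b. -/
/-!
Expanding the definition of `L` and using the skew-symmetry of `ω` gives
`ω (L x y) z + ω y (L x z) = (a - b) (ω ([x, y]_m) z - ω ([x, z]_m) y)`, so `a = b` gives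
skew-symmetry. Conversely, the cocycle identity turns the second factor at `(w, x, y)` into
`-ω ([x, y]_m) w`, and nondegeneracy provides a `w` making it nonzero as soon as `[x, y]_m ≠ 0`.
-/

section

variable {R g : Type*} [CommRing R] [LieRing g] [LieAlgebra R g]
  {m : Submodule R g} {pm : g →ₗ[R] g} {ω : g →ₗ[R] g →ₗ[R] R}

theorem omega_L_add_omega_L_eq {a b : R} {L : g → g → g}
    (hskew : ∀ x ∈ m, ∀ y ∈ m, ω x y = - ω y x)
    (hLmem : ∀ x ∈ m, ∀ y ∈ m, L x y ∈ m)
    (hLdef : ∀ x ∈ m, ∀ y ∈ m, ∀ z ∈ m,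
      ω (L x y) z = a * ω (pm ⁅x, y⁆) z + b * ω (pm ⁅x, z⁆) y)
    {x y z : g} (hx : x ∈ m) (hy : y ∈ m) (hz : z ∈ m) :
    ω (L x y) z + ω y (L x z) = (a - b) * (ω (pm ⁅x, y⁆) z - ω (pm ⁅x, z⁆) y) := by
  rw [hskew y hy (L x z) (hLmem x hx z hz), hLdef x hx y hy z hz, hLdef x hx z hz y hy]
  ring

theorem omega_pm_lie_sub_omega_pm_lie_of_cocycle
    (hcocycle : ∀ x ∈ m, ∀ y ∈ m, ∀ z ∈ m,
      ω (pm ⁅x, y⁆) z + ω (pm ⁅z, x⁆) y + ω (pm ⁅y, z⁆) x = 0)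
    {x y w : g} (hx : x ∈ m) (hy : y ∈ m) (hw : w ∈ m) :
    ω (pm ⁅w, x⁆) y - ω (pm ⁅w, y⁆) x = - ω (pm ⁅x, y⁆) w := by
  have hcoc := hcocycle x hx y hy w hw
  rw [← lie_skew y w, map_neg, map_neg, LinearMap.neg_apply] at hcoc
  linear_combination hcoc

end

theorem stmt2_general {g : Type*} [LieRing g] [LieAlgebra ℝ g]
    (m : Submodule ℝ g)
    (pm : g →ₗ[ℝ] g) (hpm_mem : ∀ x, pm x ∈ m)
    (ω : g →ₗ[ℝ] g →ₗ[ℝ] ℝ)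
    (hskew : ∀ x ∈ m, ∀ y ∈ m, ω x y = - ω y x)
    (hnondeg : ∀ x ∈ m, (∀ y ∈ m, ω x y = 0) → x = 0)
    (hcocycle : ∀ x ∈ m, ∀ y ∈ m, ∀ z ∈ m,
      ω (pm ⁅x, y⁆) z + ω (pm ⁅z, x⁆) y + ω (pm ⁅y, z⁆) x = 0)
    (a b : ℝ) (L : g → g → g)
    (hLmem : ∀ x ∈ m, ∀ y ∈ m, L x y ∈ m)
    (hLdef : ∀ x ∈ m, ∀ y ∈ m, ∀ z ∈ m,
      ω (L x y) z = a * ω (pm ⁅x, y⁆) z + b * ω (pm ⁅x, z⁆) y) :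
    (a = b → ∀ x ∈ m, ∀ y ∈ m, ∀ z ∈ m, ω (L x y) z = - ω y (L x z)) ∧
    ((∃ x ∈ m, ∃ y ∈ m, pm ⁅x, y⁆ ≠ 0) →
      (∀ x ∈ m, ∀ y ∈ m, ∀ z ∈ m, ω (L x y) z = - ω y (L x z)) → a = b) := by
  constructor
  · rintro rfl x hx y hy z hz
    have hdefect := omega_L_add_omega_L_eq hskew hLmem hLdef hx hy hz
    rw [sub_self, zero_mul] at hdefect
    exact eq_neg_of_add_eq_zero_left hdefect
  · rintro ⟨x, hx, y, hy, hxy⟩ hsk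
    obtain ⟨w, hw, hxyw⟩ : ∃ w ∈ m, ω (pm ⁅x, y⁆) w ≠ 0 := by
      by_contra! h
      exact hxy (hnondeg _ (hpm_mem _) h)
    have hdefect := omega_L_add_omega_L_eq hskew hLmem hLdef hw hx hy
    rw [hsk w hw x hx y hy, neg_add_cancel,
      omega_pm_lie_sub_omega_pm_lie_of_cocycle hcocycle hx hy hw] at hdefect
    exact sub_eq_zero.mp <|
      (mul_eq_zero.mp hdefect.symm).resolve_right (neg_ne_zero.mpr hxyw)

/-- L^{a,b} is ω-skew for all x if a = b; conversely, if G/H is not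
locally symmetric, skew-symmetry for all x forces a = b. -/
theorem stmt2 {g : Type*} [LieRing g] [LieAlgebra ℝ g]
    (h m : Submodule ℝ g) (hcompl : IsCompl h m)
    (hbr : ∀ u ∈ h, ∀ x ∈ m, ⁅u, x⁆ ∈ m)
    (pm : g →ₗ[ℝ] g) (hpm_mem : ∀ x, pm x ∈ m)
    (hpm_m : ∀ x ∈ m, pm x = x) (hpm_h : ∀ x ∈ h, pm x = 0)
    (ω : g →ₗ[ℝ] g →ₗ[ℝ] ℝ)
    (hskew : ∀ x ∈ m, ∀ y ∈ m, ω x y = - ω y x)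
    (hnondeg : ∀ x ∈ m, (∀ y ∈ m, ω x y = 0) → x = 0)
    (hcocycle : ∀ x ∈ m, ∀ y ∈ m, ∀ z ∈ m,
      ω (pm ⁅x, y⁆) z + ω (pm ⁅z, x⁆) y + ω (pm ⁅y, z⁆) x = 0)
    (a b : ℝ) (L : g → g → g)
    (hLmem : ∀ x ∈ m, ∀ y ∈ m, L x y ∈ m)
    (hLdef : ∀ x ∈ m, ∀ y ∈ m, ∀ z ∈ m,
      ω (L x y) z = a * ω (pm ⁅x, y⁆) z + b * ω (pm ⁅x, z⁆) y) :
    (a = b → ∀ x ∈ m, ∀ y ∈ m, ∀ z ∈ m, ω (L x y) z = - ω y (L x z)) ∧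
    ((∃ x ∈ m, ∃ y ∈ m, pm ⁅x, y⁆ ≠ 0) →
      (∀ x ∈ m, ∀ y ∈ m, ∀ z ∈ m, ω (L x y) z = - ω y (L x z)) → a = b) :=
  stmt2_general m pm hpm_mem ω hskew hnondeg hcocycle a b L hLmem hLdef
end

section
/- With the reductive setup and ω a 2-cocycle symplectic tensor on m, the connection product L^{a,b} is both torsion-free (L^{a,b}_x(y) − L^{a,b}_y(x) = [x,y]_m) and ω-skew in the second slot (ω(L^{a,b}_x(y), z) + ω(y, L^{a,b}_x(z)) = 0) for all x,y,z if and only if a = b = 1/3, provided there exist x,y ∈ m with [x,y]_m ≠ 0. -/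
/-!
Write `μ x y` for `[x, y]_m`. The cocycle condition together with the antisymmetry of `μ` gives
`ω(μ x z, y) = ω(μ x y, z) + ω(μ y z, x)`, and with it the defining formula of `L = L^{a,b}` yields
`ω(L_x y - L_y x, z) = (2a + b) ω(μ x y, z)` and `ω(L_x y, z) + ω(y, L_x z) = (b - a) ω(μ y z, x)`.
Since `ω` is nondegenerate and `μ ≠ 0`, torsion-freeness is equivalent to `2a + b = 1` and
`ω`-skewness to `a = b`.
-/

section

variable {R V : Type*} [CommRing R] [AddCommGroup V] [Module R V]
  {m : Submodule R V} {ω : V →ₗ[R] V →ₗ[R] R} {μ : V → V → V} {L : V → V → V} {a b : R}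

lemma omega_bracket_eq_add_of_cocycle (hμ : ∀ x y, μ y x = -μ x y)
    (hcocycle : ∀ x ∈ m, ∀ y ∈ m, ∀ z ∈ m, ω (μ x y) z + ω (μ z x) y + ω (μ y z) x = 0)
    {x y z : V} (hx : x ∈ m) (hy : y ∈ m) (hz : z ∈ m) :
    ω (μ x z) y = ω (μ x y) z + ω (μ y z) x := by
  have h := hcocycle x hx y hy z hz
  rw [hμ x z, map_neg, LinearMap.neg_apply] at h
  linear_combination -h

lemma omega_sub_swap_eq (hμ : ∀ x y, μ y x = -μ x y)
    (hcocycle : ∀ x ∈ m, ∀ y ∈ m, ∀ z ∈ m, ω (μ x y) z + ω (μ z x) y + ω (μ y z) x = 0)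
    (hLdef : ∀ x ∈ m, ∀ y ∈ m, ∀ z ∈ m, ω (L x y) z = a * ω (μ x y) z + b * ω (μ x z) y)
    {x y z : V} (hx : x ∈ m) (hy : y ∈ m) (hz : z ∈ m) :
    ω (L x y - L y x) z = (2 * a + b) * ω (μ x y) z := by
  rw [map_sub, LinearMap.sub_apply, hLdef x hx y hy z hz, hLdef y hy x hx z hz,
    omega_bracket_eq_add_of_cocycle hμ hcocycle hx hy hz, hμ x y, map_neg, LinearMap.neg_apply]
  ring

lemma omega_add_omega_eq (hskew : ∀ x ∈ m, ∀ y ∈ m, ω x y = -ω y x)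
    (hμ : ∀ x y, μ y x = -μ x y)
    (hcocycle : ∀ x ∈ m, ∀ y ∈ m, ∀ z ∈ m, ω (μ x y) z + ω (μ z x) y + ω (μ y z) x = 0)
    (hLmem : ∀ x ∈ m, ∀ y ∈ m, L x y ∈ m)
    (hLdef : ∀ x ∈ m, ∀ y ∈ m, ∀ z ∈ m, ω (L x y) z = a * ω (μ x y) z + b * ω (μ x z) y)
    {x y z : V} (hx : x ∈ m) (hy : y ∈ m) (hz : z ∈ m) :
    ω (L x y) z + ω y (L x z) = (b - a) * ω (μ y z) x := by
  rw [hskew y hy (L x z) (hLmem x hx z hz), hLdef x hx y hy z hz, hLdef x hx z hz y hy,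
    omega_bracket_eq_add_of_cocycle hμ hcocycle hx hy hz]
  ring

lemma exists_omega_bracket_ne_zero (hnondeg : ∀ x ∈ m, (∀ y ∈ m, ω x y = 0) → x = 0)
    (hμmem : ∀ x y, μ x y ∈ m) (hns : ∃ x ∈ m, ∃ y ∈ m, μ x y ≠ 0) :
    ∃ x ∈ m, ∃ y ∈ m, ∃ z ∈ m, ω (μ x y) z ≠ 0 := by
  obtain ⟨x, hx, y, hy, hxy⟩ := hns
  by_contra! h
  exact hxy (hnondeg _ (hμmem x y) (h x hx y hy))

lemma eq_zero_of_forall_mul_omega_bracket_eq_zero [NoZeroDivisors R] {c : R}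
    (hne : ∃ x ∈ m, ∃ y ∈ m, ∃ z ∈ m, ω (μ x y) z ≠ 0)
    (h : ∀ x ∈ m, ∀ y ∈ m, ∀ z ∈ m, c * ω (μ x y) z = 0) : c = 0 := by
  obtain ⟨x, hx, y, hy, z, hz, hxyz⟩ := hne
  exact (mul_eq_zero.mp (h x hx y hy z hz)).resolve_right hxyz

lemma torsionFree_iff [NoZeroDivisors R]
    (hnondeg : ∀ x ∈ m, (∀ y ∈ m, ω x y = 0) → x = 0)
    (hμ : ∀ x y, μ y x = -μ x y) (hμmem : ∀ x y, μ x y ∈ m)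
    (hcocycle : ∀ x ∈ m, ∀ y ∈ m, ∀ z ∈ m, ω (μ x y) z + ω (μ z x) y + ω (μ y z) x = 0)
    (hLmem : ∀ x ∈ m, ∀ y ∈ m, L x y ∈ m)
    (hLdef : ∀ x ∈ m, ∀ y ∈ m, ∀ z ∈ m, ω (L x y) z = a * ω (μ x y) z + b * ω (μ x z) y)
    (hns : ∃ x ∈ m, ∃ y ∈ m, μ x y ≠ 0) :
    (∀ x ∈ m, ∀ y ∈ m, L x y - L y x = μ x y) ↔ 2 * a + b = 1 := by
  constructor
  · intro htf
    refine sub_eq_zero.mp <| eq_zero_of_forall_mul_omega_bracket_eq_zero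
      (exists_omega_bracket_ne_zero hnondeg hμmem hns) fun x hx y hy z hz => ?_
    have h := omega_sub_swap_eq hμ hcocycle hLdef hx hy hz
    rw [htf x hx y hy] at h
    linear_combination -h
  · intro hab x hx y hy
    rw [← sub_eq_zero]
    refine hnondeg _ (sub_mem (sub_mem (hLmem x hx y hy) (hLmem y hy x hx)) (hμmem x y))
      fun z hz => ?_
    rw [map_sub, LinearMap.sub_apply, omega_sub_swap_eq hμ hcocycle hLdef hx hy hz, hab]
    ring

lemma forall_omega_add_omega_eq_zero_iff [NoZeroDivisors R]
    (hskew : ∀ x ∈ m, ∀ y ∈ m, ω x y = -ω y x)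
    (hnondeg : ∀ x ∈ m, (∀ y ∈ m, ω x y = 0) → x = 0)
    (hμ : ∀ x y, μ y x = -μ x y) (hμmem : ∀ x y, μ x y ∈ m)
    (hcocycle : ∀ x ∈ m, ∀ y ∈ m, ∀ z ∈ m, ω (μ x y) z + ω (μ z x) y + ω (μ y z) x = 0)
    (hLmem : ∀ x ∈ m, ∀ y ∈ m, L x y ∈ m)
    (hLdef : ∀ x ∈ m, ∀ y ∈ m, ∀ z ∈ m, ω (L x y) z = a * ω (μ x y) z + b * ω (μ x z) y)
    (hns : ∃ x ∈ m, ∃ y ∈ m, μ x y ≠ 0) :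
    (∀ x ∈ m, ∀ y ∈ m, ∀ z ∈ m, ω (L x y) z + ω y (L x z) = 0) ↔ a = b := by
  constructor
  · intro hsk
    refine (sub_eq_zero.mp <| eq_zero_of_forall_mul_omega_bracket_eq_zero
      (exists_omega_bracket_ne_zero hnondeg hμmem hns) fun y hy z hz x hx => ?_).symm
    rw [← omega_add_omega_eq hskew hμ hcocycle hLmem hLdef hx hy hz, hsk x hx y hy z hz]
  · rintro rfl x hx y hy z hz
    rw [omega_add_omega_eq hskew hμ hcocycle hLmem hLdef hx hy hz, sub_self, zero_mul]

end

theorem stmt3_general {g : Type*} [LieRing g] [LieAlgebra ℝ g]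
    (m : Submodule ℝ g)
    (pm : g →ₗ[ℝ] g) (hpm_mem : ∀ x, pm x ∈ m)
    (ω : g →ₗ[ℝ] g →ₗ[ℝ] ℝ)
    (hskew : ∀ x ∈ m, ∀ y ∈ m, ω x y = - ω y x)
    (hnondeg : ∀ x ∈ m, (∀ y ∈ m, ω x y = 0) → x = 0)
    (hcocycle : ∀ x ∈ m, ∀ y ∈ m, ∀ z ∈ m,
      ω (pm ⁅x, y⁆) z + ω (pm ⁅z, x⁆) y + ω (pm ⁅y, z⁆) x = 0)
    (a b : ℝ) (L : g → g → g)
    (hLmem : ∀ x ∈ m, ∀ y ∈ m, L x y ∈ m)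
    (hLdef : ∀ x ∈ m, ∀ y ∈ m, ∀ z ∈ m,
      ω (L x y) z = a * ω (pm ⁅x, y⁆) z + b * ω (pm ⁅x, z⁆) y)
    (hns : ∃ x ∈ m, ∃ y ∈ m, pm ⁅x, y⁆ ≠ 0) :
    ((∀ x ∈ m, ∀ y ∈ m, L x y - L y x = pm ⁅x, y⁆) ∧
     (∀ x ∈ m, ∀ y ∈ m, ∀ z ∈ m, ω (L x y) z + ω y (L x z) = 0)) ↔
    (a = 1/3 ∧ b = 1/3) := by
  have hμ : ∀ x y : g, pm ⁅y, x⁆ = -pm ⁅x, y⁆ := fun x y => by rw [← lie_skew, map_neg]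
  rw [torsionFree_iff (μ := fun x y => pm ⁅x, y⁆) hnondeg hμ (fun _ _ => hpm_mem _) hcocycle hLmem hLdef hns,
    forall_omega_add_omega_eq_zero_iff (μ := fun x y => pm ⁅x, y⁆) hskew hnondeg hμ (fun _ _ => hpm_mem _)
      hcocycle hLmem hLdef hns]
  constructor
  · rintro ⟨h₁, rfl⟩
    constructor <;> linarith
  · rintro ⟨rfl, rfl⟩
    norm_num

/-- L^{a,b} is torsion-free and ω-skew (i.e. symplectic) iff a = b = 1/3,
provided the space is not locally symmetric. -/
theorem stmt3 {g : Type*} [LieRing g] [LieAlgebra ℝ g]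
    (h m : Submodule ℝ g) (hcompl : IsCompl h m)
    (hbr : ∀ u ∈ h, ∀ x ∈ m, ⁅u, x⁆ ∈ m)
    (pm : g →ₗ[ℝ] g) (hpm_mem : ∀ x, pm x ∈ m)
    (hpm_m : ∀ x ∈ m, pm x = x) (hpm_h : ∀ x ∈ h, pm x = 0)
    (ω : g →ₗ[ℝ] g →ₗ[ℝ] ℝ)
    (hskew : ∀ x ∈ m, ∀ y ∈ m, ω x y = - ω y x)
    (hnondeg : ∀ x ∈ m, (∀ y ∈ m, ω x y = 0) → x = 0)
    (hcocycle : ∀ x ∈ m, ∀ y ∈ m, ∀ z ∈ m,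
      ω (pm ⁅x, y⁆) z + ω (pm ⁅z, x⁆) y + ω (pm ⁅y, z⁆) x = 0)
    (a b : ℝ) (L : g → g → g)
    (hLmem : ∀ x ∈ m, ∀ y ∈ m, L x y ∈ m)
    (hLdef : ∀ x ∈ m, ∀ y ∈ m, ∀ z ∈ m,
      ω (L x y) z = a * ω (pm ⁅x, y⁆) z + b * ω (pm ⁅x, z⁆) y)
    (hns : ∃ x ∈ m, ∃ y ∈ m, pm ⁅x, y⁆ ≠ 0) :
    ((∀ x ∈ m, ∀ y ∈ m, L x y - L y x = pm ⁅x, y⁆) ∧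
     (∀ x ∈ m, ∀ y ∈ m, ∀ z ∈ m, ω (L x y) z + ω y (L x z) = 0)) ↔
    (a = 1/3 ∧ b = 1/3) :=
  stmt3_general m pm hpm_mem ω hskew hnondeg hcocycle a b L hLmem hLdef hns
end

section
/- Let g = h ⊕ m with [h,m] ⊆ m, and let ω be a nondegenerate skew 2-cocycle on m. Define L^{0,1} by ω(L^{0,1}_x(y), z) = ω([x,z]_m, y), and D_{x,y}(z) = [[x,z]_h, y]. Then the curvature K^{0,1}(x,y) := [L^{0,1}_x, L^{0,1}_y] − L^{0,1}_{[x,y]_m} − ad_{[x,y]_h} (as an endomorphism of m) satisfies ω(K^{0,1}(x,y)z, z') = ω(z, D_{x,y}(z') − D_{y,x}(z')) for all x,y,z,z' ∈ m; i.e., K^{0,1}(x,y) = D_{x,y}^⋇ − D_{y,x}^⋇, where F^⋇ denotes the ω-adjoint of F. -/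
/-!
By the defining relation, `L^{0,1}_x` is minus the `ω`-adjoint of `ad^m_x := pm ∘ ad_x` on `m`,
and `ad_u` is `ω`-skew for `u ∈ h`. Hence the `ω`-adjoint of `K^{0,1}(x,y)` is
`[ad^m_y, ad^m_x] + ad^m_{[x,y]_m} + ad_{[x,y]_h}`. Splitting each inner bracket along
`g = h ⊕ m` and applying the Jacobi identity, everything cancels except the two `h`-components
`[[x,z']_h, y] - [[y,z']_h, x]`.
-/

section Projection

variable {R g : Type*} [CommRing R] [LieRing g] [LieAlgebra R g]
  {h m : Submodule R g} {pm ph : g →ₗ[R] g}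

theorem pm_lie_pm_right (hbr : ∀ u ∈ h, ∀ x ∈ m, ⁅u, x⁆ ∈ m) (hph_mem : ∀ x, ph x ∈ h)
    (hpm_m : ∀ x ∈ m, pm x = x) (hsum : ∀ x, pm x + ph x = x) {w : g} (hw : w ∈ m) (v : g) :
    pm ⁅w, pm v⁆ = pm ⁅w, v⁆ + ⁅ph v, w⁆ := by
  calc pm ⁅w, pm v⁆ = pm ⁅w, pm v + ph v⁆ - pm ⁅w, ph v⁆ := by
        rw [lie_add, map_add, add_sub_cancel_right]
    _ = pm ⁅w, v⁆ + ⁅ph v, w⁆ := by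
        rw [hsum, ← lie_skew w (ph v), map_neg, hpm_m _ (hbr _ (hph_mem v) w hw), sub_neg_eq_add]

theorem pm_lie_pm_left (hbr : ∀ u ∈ h, ∀ x ∈ m, ⁅u, x⁆ ∈ m) (hph_mem : ∀ x, ph x ∈ h)
    (hpm_m : ∀ x ∈ m, pm x = x) (hsum : ∀ x, pm x + ph x = x) (v : g) {w : g} (hw : w ∈ m) :
    pm ⁅pm v, w⁆ = pm ⁅v, w⁆ - ⁅ph v, w⁆ := by
  rw [← lie_skew, map_neg, pm_lie_pm_right hbr hph_mem hpm_m hsum hw, ← lie_skew w v, map_neg,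
    neg_add, neg_neg, ← sub_eq_add_neg]

theorem lie_ph_sub_lie_ph_eq (hbr : ∀ u ∈ h, ∀ x ∈ m, ⁅u, x⁆ ∈ m) (hph_mem : ∀ x, ph x ∈ h)
    (hpm_m : ∀ x ∈ m, pm x = x) (hsum : ∀ x, pm x + ph x = x)
    {x y z : g} (hx : x ∈ m) (hy : y ∈ m) (hz : z ∈ m) :
    ⁅ph ⁅x, z⁆, y⁆ - ⁅ph ⁅y, z⁆, x⁆ =
      pm ⁅y, pm ⁅x, z⁆⁆ - pm ⁅x, pm ⁅y, z⁆⁆ + pm ⁅pm ⁅x, y⁆, z⁆ + ⁅ph ⁅x, y⁆, z⁆ := by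
  have jacobi : pm ⁅x, ⁅y, z⁆⁆ - pm ⁅y, ⁅x, z⁆⁆ - pm ⁅⁅x, y⁆, z⁆ = 0 := by
    rw [← map_sub, ← map_sub, lie_lie, sub_self, map_zero]
  rw [pm_lie_pm_right hbr hph_mem hpm_m hsum hx, pm_lie_pm_right hbr hph_mem hpm_m hsum hy,
    pm_lie_pm_left hbr hph_mem hpm_m hsum _ hz, ← sub_eq_zero, ← jacobi]
  abel

end Projection

section Adjoint

variable {R g : Type*} [CommRing R] [AddCommGroup g] [Module R g] [Bracket g g]
  {m : Submodule R g}

theorem omega_L01_left {pm : g →ₗ[R] g} {ω : g →ₗ[R] g →ₗ[R] R} {L01 : g → g → g}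
    (hpm_mem : ∀ x, pm x ∈ m) (hskew : ∀ x ∈ m, ∀ y ∈ m, ω x y = - ω y x)
    (hLdef : ∀ x ∈ m, ∀ y ∈ m, ∀ z ∈ m, ω (L01 x y) z = ω (pm ⁅x, z⁆) y)
    {x w z : g} (hx : x ∈ m) (hw : w ∈ m) (hz : z ∈ m) :
    ω (L01 x w) z = - ω w (pm ⁅x, z⁆) := by
  rw [hLdef x hx w hw z hz, hskew _ (hpm_mem _) w hw]

end Adjoint

theorem stmt7_general {g : Type*} [LieRing g] [LieAlgebra ℝ g]
    (h m : Submodule ℝ g)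
    (hbr : ∀ u ∈ h, ∀ x ∈ m, ⁅u, x⁆ ∈ m)
    (pm ph : g →ₗ[ℝ] g)
    (hpm_mem : ∀ x, pm x ∈ m) (hph_mem : ∀ x, ph x ∈ h)
    (hpm_m : ∀ x ∈ m, pm x = x)
    (hsum : ∀ x, pm x + ph x = x)
    (ω : g →ₗ[ℝ] g →ₗ[ℝ] ℝ)
    (hskew : ∀ x ∈ m, ∀ y ∈ m, ω x y = - ω y x)
    (hinv : ∀ u ∈ h, ∀ x ∈ m, ∀ y ∈ m, ω ⁅u, x⁆ y + ω x ⁅u, y⁆ = 0)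
    (L01 : g → g → g)
    (hLmem : ∀ x ∈ m, ∀ y ∈ m, L01 x y ∈ m)
    (hLdef : ∀ x ∈ m, ∀ y ∈ m, ∀ z ∈ m, ω (L01 x y) z = ω (pm ⁅x, z⁆) y) :
    ∀ x ∈ m, ∀ y ∈ m, ∀ z ∈ m, ∀ z' ∈ m,
      ω (L01 x (L01 y z) - L01 y (L01 x z) - L01 (pm ⁅x, y⁆) z - ⁅ph ⁅x, y⁆, z⁆) z' =
        ω z (⁅ph ⁅x, z'⁆, y⁆ - ⁅ph ⁅y, z'⁆, x⁆) := by
  intro x hx y hy z hz z' hz'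
  have hL {a w : g} (ha : a ∈ m) (hw : w ∈ m) :=
    omega_L01_left hpm_mem hskew hLdef ha hw hz'
  have hL₂ {a b : g} (ha : a ∈ m) (hb : b ∈ m) :
      ω (L01 a (L01 b z)) z' = ω z (pm ⁅b, pm ⁅a, z'⁆⁆) := by
    rw [hL ha (hLmem b hb z hz), omega_L01_left hpm_mem hskew hLdef hb hz (hpm_mem _), neg_neg]
  have had : ω ⁅ph ⁅x, y⁆, z⁆ z' = - ω z ⁅ph ⁅x, y⁆, z'⁆ :=
    eq_neg_of_add_eq_zero_left (hinv _ (hph_mem _) z hz z' hz')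
  rw [lie_ph_sub_lie_ph_eq hbr hph_mem hpm_m hsum hx hy hz', map_sub, map_sub, map_sub,
    LinearMap.sub_apply, LinearMap.sub_apply, LinearMap.sub_apply, hL₂ hx hy, hL₂ hy hx,
    hL (hpm_mem _) hz, had, map_add, map_add, map_sub]
  abel

/-- the curvature of the Zero-One connection satisfies
ω(K^{0,1}(x,y)z, z') = ω(z, D_{x,y}(z') - D_{y,x}(z')). -/
theorem stmt7 {g : Type*} [LieRing g] [LieAlgebra ℝ g]
    (h m : Submodule ℝ g) (hcompl : IsCompl h m)
    (hbr : ∀ u ∈ h, ∀ x ∈ m, ⁅u, x⁆ ∈ m)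
    (pm ph : g →ₗ[ℝ] g)
    (hpm_mem : ∀ x, pm x ∈ m) (hph_mem : ∀ x, ph x ∈ h)
    (hpm_m : ∀ x ∈ m, pm x = x) (hpm_h : ∀ x ∈ h, pm x = 0)
    (hph_h : ∀ x ∈ h, ph x = x) (hph_m : ∀ x ∈ m, ph x = 0)
    (hsum : ∀ x, pm x + ph x = x)
    (ω : g →ₗ[ℝ] g →ₗ[ℝ] ℝ)
    (hskew : ∀ x ∈ m, ∀ y ∈ m, ω x y = - ω y x)
    (hnondeg : ∀ x ∈ m, (∀ y ∈ m, ω x y = 0) → x = 0)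
    (hcocycle : ∀ x ∈ m, ∀ y ∈ m, ∀ z ∈ m,
      ω (pm ⁅x, y⁆) z + ω (pm ⁅z, x⁆) y + ω (pm ⁅y, z⁆) x = 0)
    (hinv : ∀ u ∈ h, ∀ x ∈ m, ∀ y ∈ m, ω ⁅u, x⁆ y + ω x ⁅u, y⁆ = 0)
    (L01 : g → g → g)
    (hLmem : ∀ x ∈ m, ∀ y ∈ m, L01 x y ∈ m)
    (hLdef : ∀ x ∈ m, ∀ y ∈ m, ∀ z ∈ m, ω (L01 x y) z = ω (pm ⁅x, z⁆) y) :
    ∀ x ∈ m, ∀ y ∈ m, ∀ z ∈ m, ∀ z' ∈ m,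
      ω (L01 x (L01 y z) - L01 y (L01 x z) - L01 (pm ⁅x, y⁆) z - ⁅ph ⁅x, y⁆, z⁆) z' =
        ω z (⁅ph ⁅x, z'⁆, y⁆ - ⁅ph ⁅y, z'⁆, x⁆) :=
  stmt7_general h m hbr pm ph hpm_mem hph_mem hpm_m hsum ω hskew hinv L01 hLmem hLdef
end

section
/- Under the setup of the previous statement, the curvature K^{0,1}(x,y) vanishes for all x, y ∈ m if and only if [[m,m]_h, m] = {0}, i.e., D_{x,y} = 0 for all x, y ∈ m. In particular, if K^{0,1} = 0 then (m, [·,·]_m) is a Lie algebra (the bracket [x,y]_m satisfies the Jacobi identity). -/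
/-!
Pairing with `ω` moves each `L^{0,1}` into the other slot, and the Jacobi identity of `g`, projected
to `m`, then gives `ω(K^{0,1}(x, y) z, w) = ω([[y, w]_h, x] + [[w, x]_h, y], z)`. By nondegeneracy,
flatness says that `T(a, b, c) = [[a, b]_h, c]` satisfies `T(a, b, c) = -T(b, c, a)` on `m`; three
rotations give `T = -T`, so `T = 0`. With `T = 0` the projected Jacobi identity of `g` is exactly
the Jacobi identity of `[·, ·]_m`.
-/

theorem eq_zero_of_add_rotate_eq_zero {α M : Type*} [AddCommGroup M] [IsAddTorsionFree M]
    {s : Set α} {T : α → α → α → M}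
    (hT : ∀ a ∈ s, ∀ b ∈ s, ∀ c ∈ s, T a b c + T b c a = 0)
    {a b c : α} (ha : a ∈ s) (hb : b ∈ s) (hc : c ∈ s) : T a b c = 0 := by
  have h₁ := eq_neg_of_add_eq_zero_left (hT a ha b hb c hc)
  have h₂ := eq_neg_of_add_eq_zero_left (hT b hb c hc a ha)
  have h₃ := eq_neg_of_add_eq_zero_left (hT c hc a ha b hb)
  rw [← self_eq_neg]
  calc T a b c = -T b c a := h₁
    _ = T c a b := by rw [h₂, neg_neg]
    _ = -T a b c := h₃

section ReductiveSplitting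

variable {R g : Type*} [CommRing R] [LieRing g] [LieAlgebra R g]
  {h m : Submodule R g} {pm ph : g →ₗ[R] g}

theorem pm_lie_eq_of_mem (hbr : ∀ u ∈ h, ∀ x ∈ m, ⁅u, x⁆ ∈ m) (hph_mem : ∀ x, ph x ∈ h)
    (hpm_m : ∀ x ∈ m, pm x = x) (hsum : ∀ x, pm x + ph x = x) (u : g) {x : g} (hx : x ∈ m) :
    pm ⁅u, x⁆ = pm ⁅pm u, x⁆ + ⁅ph u, x⁆ := by
  conv_lhs => rw [← hsum u]
  rw [add_lie, map_add, hpm_m _ (hbr _ (hph_mem u) x hx)]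

theorem pm_jacobi (hbr : ∀ u ∈ h, ∀ x ∈ m, ⁅u, x⁆ ∈ m) (hph_mem : ∀ x, ph x ∈ h)
    (hpm_m : ∀ x ∈ m, pm x = x) (hsum : ∀ x, pm x + ph x = x)
    {x y z : g} (hx : x ∈ m) (hy : y ∈ m) (hz : z ∈ m) :
    pm ⁅pm ⁅x, y⁆, z⁆ + ⁅ph ⁅x, y⁆, z⁆ + (pm ⁅pm ⁅y, z⁆, x⁆ + ⁅ph ⁅y, z⁆, x⁆)
      + (pm ⁅pm ⁅z, x⁆, y⁆ + ⁅ph ⁅z, x⁆, y⁆) = 0 := by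
  have hjacobi : ⁅⁅x, y⁆, z⁆ + ⁅⁅y, z⁆, x⁆ + ⁅⁅z, x⁆, y⁆ = 0 := by
    rw [← lie_skew ⁅x, y⁆ z, ← lie_skew ⁅y, z⁆ x, ← lie_skew ⁅z, x⁆ y, ← neg_add, ← neg_add,
      neg_eq_zero, add_rotate]
    exact lie_jacobi x y z
  have hpm := pm_lie_eq_of_mem hbr hph_mem hpm_m hsum
  rw [← hpm _ hz, ← hpm _ hx, ← hpm _ hy, ← map_add, ← map_add, hjacobi, map_zero]

theorem lie_ph_add_lie_ph_eq (hbr : ∀ u ∈ h, ∀ x ∈ m, ⁅u, x⁆ ∈ m) (hph_mem : ∀ x, ph x ∈ h)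
    (hpm_m : ∀ x ∈ m, pm x = x) (hsum : ∀ x, pm x + ph x = x)
    {x y w : g} (hx : x ∈ m) (hy : y ∈ m) (hw : w ∈ m) :
    ⁅ph ⁅y, w⁆, x⁆ + ⁅ph ⁅w, x⁆, y⁆
      = pm ⁅x, pm ⁅y, w⁆⁆ - pm ⁅y, pm ⁅x, w⁆⁆ - pm ⁅pm ⁅x, y⁆, w⁆ - ⁅ph ⁅x, y⁆, w⁆ := by
  have hxyw : pm ⁅x, pm ⁅y, w⁆⁆ = -pm ⁅pm ⁅y, w⁆, x⁆ := by rw [← lie_skew, map_neg]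
  have hyxw : pm ⁅y, pm ⁅x, w⁆⁆ = pm ⁅pm ⁅w, x⁆, y⁆ := by
    rw [← lie_skew w x, map_neg, neg_lie, lie_skew]
  rw [hxyw, hyxw, ← sub_eq_zero, ← pm_jacobi hbr hph_mem hpm_m hsum hx hy hw]
  abel

def zeroOneCurvature (L01 : g → g → g) (pm ph : g →ₗ[R] g) (x y z : g) : g :=
  L01 x (L01 y z) - L01 y (L01 x z) - L01 (pm ⁅x, y⁆) z - ⁅ph ⁅x, y⁆, z⁆

variable {ω : g →ₗ[R] g →ₗ[R] R} {L01 : g → g → g}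

theorem zeroOneCurvature_mem (hbr : ∀ u ∈ h, ∀ x ∈ m, ⁅u, x⁆ ∈ m) (hph_mem : ∀ x, ph x ∈ h)
    (hpm_mem : ∀ x, pm x ∈ m) (hLmem : ∀ x ∈ m, ∀ y ∈ m, L01 x y ∈ m)
    {x y z : g} (hx : x ∈ m) (hy : y ∈ m) (hz : z ∈ m) :
    zeroOneCurvature L01 pm ph x y z ∈ m :=
  m.sub_mem (m.sub_mem (m.sub_mem (hLmem _ hx _ (hLmem _ hy _ hz)) (hLmem _ hy _ (hLmem _ hx _ hz)))
    (hLmem _ (hpm_mem _) _ hz)) (hbr _ (hph_mem _) _ hz)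

theorem form_zeroOneCurvature (hbr : ∀ u ∈ h, ∀ x ∈ m, ⁅u, x⁆ ∈ m) (hph_mem : ∀ x, ph x ∈ h)
    (hpm_mem : ∀ x, pm x ∈ m) (hpm_m : ∀ x ∈ m, pm x = x) (hsum : ∀ x, pm x + ph x = x)
    (hskew : ∀ x ∈ m, ∀ y ∈ m, ω x y = - ω y x)
    (hinv : ∀ u ∈ h, ∀ x ∈ m, ∀ y ∈ m, ω ⁅u, x⁆ y + ω x ⁅u, y⁆ = 0)
    (hLmem : ∀ x ∈ m, ∀ y ∈ m, L01 x y ∈ m)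
    (hLdef : ∀ x ∈ m, ∀ y ∈ m, ∀ z ∈ m, ω (L01 x y) z = ω (pm ⁅x, z⁆) y)
    {x y z w : g} (hx : x ∈ m) (hy : y ∈ m) (hz : z ∈ m) (hw : w ∈ m) :
    ω (zeroOneCurvature L01 pm ph x y z) w = ω (⁅ph ⁅y, w⁆, x⁆ + ⁅ph ⁅w, x⁆, y⁆) z := by
  have hLyz := hLmem _ hy _ hz
  have hLxz := hLmem _ hx _ hz
  have hpxw := hpm_mem ⁅x, w⁆
  have hpyw := hpm_mem ⁅y, w⁆
  have hxy : ω (L01 x (L01 y z)) w = -ω (pm ⁅y, pm ⁅x, w⁆⁆) z := by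
    rw [hLdef _ hx _ hLyz _ hw, hskew _ hpxw _ hLyz, hLdef _ hy _ hz _ hpxw]
  have hyx : ω (L01 y (L01 x z)) w = -ω (pm ⁅x, pm ⁅y, w⁆⁆) z := by
    rw [hLdef _ hy _ hLxz _ hw, hskew _ hpyw _ hLxz, hLdef _ hx _ hz _ hpyw]
  have hbracket : ω (L01 (pm ⁅x, y⁆) z) w = ω (pm ⁅pm ⁅x, y⁆, w⁆) z :=
    hLdef _ (hpm_mem _) _ hz _ hw
  have hph : ω ⁅ph ⁅x, y⁆, z⁆ w = ω ⁅ph ⁅x, y⁆, w⁆ z := by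
    have hu := hph_mem ⁅x, y⁆
    rw [eq_neg_of_add_eq_zero_left (hinv _ hu _ hz _ hw), hskew _ hz _ (hbr _ hu _ hw), neg_neg]
  rw [lie_ph_add_lie_ph_eq hbr hph_mem hpm_m hsum hx hy hw, zeroOneCurvature]
  simp only [map_sub, LinearMap.sub_apply]
  rw [hxy, hyx, hbracket, hph]
  ring

end ReductiveSplitting

theorem forall_eq_zero_iff_of_form_eq {R g : Type*} [CommRing R] [AddCommGroup g] [Module R g]
    {m : Submodule R g} {ω : g →ₗ[R] g →ₗ[R] R} {K S : g → g → g → g}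
    (hnondeg : ∀ x ∈ m, (∀ y ∈ m, ω x y = 0) → x = 0)
    (hK : ∀ x ∈ m, ∀ y ∈ m, ∀ z ∈ m, K x y z ∈ m) (hS : ∀ x ∈ m, ∀ y ∈ m, ∀ w ∈ m, S x y w ∈ m)
    (hKS : ∀ x ∈ m, ∀ y ∈ m, ∀ z ∈ m, ∀ w ∈ m, ω (K x y z) w = ω (S x y w) z) :
    (∀ x ∈ m, ∀ y ∈ m, ∀ z ∈ m, K x y z = 0) ↔ ∀ x ∈ m, ∀ y ∈ m, ∀ w ∈ m, S x y w = 0 := by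
  constructor
  · intro hK0 x hx y hy w hw
    refine hnondeg _ (hS x hx y hy w hw) fun z hz => ?_
    rw [← hKS x hx y hy z hz w hw, hK0 x hx y hy z hz, map_zero, LinearMap.zero_apply]
  · intro hS0 x hx y hy z hz
    refine hnondeg _ (hK x hx y hy z hz) fun w hw => ?_
    rw [hKS x hx y hy z hz w hw, hS0 x hx y hy w hw, map_zero, LinearMap.zero_apply]

theorem stmt8_general {g : Type*} [LieRing g] [LieAlgebra ℝ g]
    (h m : Submodule ℝ g)
    (hbr : ∀ u ∈ h, ∀ x ∈ m, ⁅u, x⁆ ∈ m)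
    (pm ph : g →ₗ[ℝ] g)
    (hpm_mem : ∀ x, pm x ∈ m) (hph_mem : ∀ x, ph x ∈ h)
    (hpm_m : ∀ x ∈ m, pm x = x)
    (hsum : ∀ x, pm x + ph x = x)
    (ω : g →ₗ[ℝ] g →ₗ[ℝ] ℝ)
    (hskew : ∀ x ∈ m, ∀ y ∈ m, ω x y = - ω y x)
    (hnondeg : ∀ x ∈ m, (∀ y ∈ m, ω x y = 0) → x = 0)
    (hinv : ∀ u ∈ h, ∀ x ∈ m, ∀ y ∈ m, ω ⁅u, x⁆ y + ω x ⁅u, y⁆ = 0)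
    (L01 : g → g → g)
    (hLmem : ∀ x ∈ m, ∀ y ∈ m, L01 x y ∈ m)
    (hLdef : ∀ x ∈ m, ∀ y ∈ m, ∀ z ∈ m, ω (L01 x y) z = ω (pm ⁅x, z⁆) y) :
    ((∀ x ∈ m, ∀ y ∈ m, ∀ z ∈ m,
        L01 x (L01 y z) - L01 y (L01 x z) - L01 (pm ⁅x, y⁆) z - ⁅ph ⁅x, y⁆, z⁆ = 0) ↔
      (∀ x ∈ m, ∀ y ∈ m, ∀ z ∈ m, ⁅ph ⁅x, z⁆, y⁆ = 0)) ∧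
    ((∀ x ∈ m, ∀ y ∈ m, ∀ z ∈ m,
        L01 x (L01 y z) - L01 y (L01 x z) - L01 (pm ⁅x, y⁆) z - ⁅ph ⁅x, y⁆, z⁆ = 0) →
      ∀ x ∈ m, ∀ y ∈ m, ∀ z ∈ m,
        pm ⁅pm ⁅x, y⁆, z⁆ + pm ⁅pm ⁅y, z⁆, x⁆ + pm ⁅pm ⁅z, x⁆, y⁆ = 0) := by
  have : IsAddTorsionFree g := .of_isTorsionFree ℝ g
  have hflat := forall_eq_zero_iff_of_form_eq (K := zeroOneCurvature L01 pm ph)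
    (S := fun x y w => ⁅ph ⁅y, w⁆, x⁆ + ⁅ph ⁅w, x⁆, y⁆) hnondeg
    (fun _ hx _ hy _ hz => zeroOneCurvature_mem hbr hph_mem hpm_mem hLmem hx hy hz)
    (fun _ hx _ hy _ hw => m.add_mem (hbr _ (hph_mem _) _ hx) (hbr _ (hph_mem _) _ hy))
    (fun _ hx _ hy _ hz _ hw =>
      form_zeroOneCurvature hbr hph_mem hpm_mem hpm_m hsum hskew hinv hLmem hLdef hx hy hz hw)
  have hrotate : (∀ x ∈ m, ∀ y ∈ m, ∀ w ∈ m, ⁅ph ⁅y, w⁆, x⁆ + ⁅ph ⁅w, x⁆, y⁆ = 0) ↔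
      ∀ x ∈ m, ∀ y ∈ m, ∀ z ∈ m, ⁅ph ⁅x, z⁆, y⁆ = 0 :=
    ⟨fun hS _ hx _ hy _ hz => eq_zero_of_add_rotate_eq_zero (T := fun a b c => ⁅ph ⁅a, b⁆, c⁆)
        (fun _ ha _ hb _ hc => hS _ hc _ ha _ hb) hx hz hy,
      fun hD x hx y hy w hw => by rw [hD y hy x hx w hw, hD w hw y hy x hx, add_zero]⟩
  have hflat_iff := hflat.trans hrotate
  refine ⟨hflat_iff, fun hK x hx y hy z hz => ?_⟩
  have hD := hflat_iff.1 hK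
  simpa only [hD x hx z hz y hy, hD y hy x hx z hz, hD z hz y hy x hx, add_zero]
    using pm_jacobi hbr hph_mem hpm_m hsum hx hy hz

/-- the Zero-One connection is flat iff [[m,m]_h, m] = 0; and if it is
flat then the projected bracket on m satisfies the Jacobi identity. -/
theorem stmt8 {g : Type*} [LieRing g] [LieAlgebra ℝ g]
    (h m : Submodule ℝ g) (hcompl : IsCompl h m)
    (hbr : ∀ u ∈ h, ∀ x ∈ m, ⁅u, x⁆ ∈ m)
    (pm ph : g →ₗ[ℝ] g)
    (hpm_mem : ∀ x, pm x ∈ m) (hph_mem : ∀ x, ph x ∈ h)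
    (hpm_m : ∀ x ∈ m, pm x = x) (hpm_h : ∀ x ∈ h, pm x = 0)
    (hph_h : ∀ x ∈ h, ph x = x) (hph_m : ∀ x ∈ m, ph x = 0)
    (hsum : ∀ x, pm x + ph x = x)
    (ω : g →ₗ[ℝ] g →ₗ[ℝ] ℝ)
    (hskew : ∀ x ∈ m, ∀ y ∈ m, ω x y = - ω y x)
    (hnondeg : ∀ x ∈ m, (∀ y ∈ m, ω x y = 0) → x = 0)
    (hcocycle : ∀ x ∈ m, ∀ y ∈ m, ∀ z ∈ m,
      ω (pm ⁅x, y⁆) z + ω (pm ⁅z, x⁆) y + ω (pm ⁅y, z⁆) x = 0)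
    (hinv : ∀ u ∈ h, ∀ x ∈ m, ∀ y ∈ m, ω ⁅u, x⁆ y + ω x ⁅u, y⁆ = 0)
    (L01 : g → g → g)
    (hLmem : ∀ x ∈ m, ∀ y ∈ m, L01 x y ∈ m)
    (hLdef : ∀ x ∈ m, ∀ y ∈ m, ∀ z ∈ m, ω (L01 x y) z = ω (pm ⁅x, z⁆) y) :
    ((∀ x ∈ m, ∀ y ∈ m, ∀ z ∈ m,
        L01 x (L01 y z) - L01 y (L01 x z) - L01 (pm ⁅x, y⁆) z - ⁅ph ⁅x, y⁆, z⁆ = 0) ↔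
      (∀ x ∈ m, ∀ y ∈ m, ∀ z ∈ m, ⁅ph ⁅x, z⁆, y⁆ = 0)) ∧
    ((∀ x ∈ m, ∀ y ∈ m, ∀ z ∈ m,
        L01 x (L01 y z) - L01 y (L01 x z) - L01 (pm ⁅x, y⁆) z - ⁅ph ⁅x, y⁆, z⁆ = 0) →
      ∀ x ∈ m, ∀ y ∈ m, ∀ z ∈ m,
        pm ⁅pm ⁅x, y⁆, z⁆ + pm ⁅pm ⁅y, z⁆, x⁆ + pm ⁅pm ⁅z, x⁆, y⁆ = 0) :=
  stmt8_general h m hbr pm ph hpm_mem hph_mem hpm_m hsum ω hskew hnondeg hinv L01 hLmem hLdef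
end

section
/- Let (g, ω) be a symplectic Lie algebra with canonical left-symmetric product L^{0,1} defined by ω(L^{0,1}_x(y), z) = −ω(y, [x,z]), and set R^{0,1}_x(y) := L^{0,1}_y(x). Then for all x, y ∈ g: (i) ω(R^{0,1}_x(y), z) = ω(y, R^{0,1}_x(z)); (ii) tr(L^{0,1}_x ∘ L^{0,1}_y) = tr(ad_x ∘ ad_y); (iii) tr(R^{0,1}_x ∘ R^{0,1}_y) = 2·tr(ad_x ∘ ad_y) + 2·tr(ad_x ∘ (ad_y)^⋇), where F^⋇ is the ω-adjoint. -/
/-!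
Write `A y` for the ω-adjoint `(ad y)^⋇`. The defining identity of `L^{0,1}` says exactly that
`L^{0,1}_x = -A x`, and the cocycle identity, read as `ω(x, [y,z]) = ω([x,y], z) + ω(y, [x,z])`,
turns `R^{0,1}_x` into `-(ad x + A x)`. For nondegenerate `ω`, an endomorphism and its
ω-adjoint have the same trace, since `ω : g ≃ g*` conjugates one to the transpose of the other.
Hence `tr(A x ∘ A y) = tr(ad y ∘ ad x)` and `tr(A x ∘ ad y) = tr(A y ∘ ad x)`, and expanding the
products gives (ii) and (iii).
-/

open LinearMap (BilinForm IsAdjointPair trace)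
open LieAlgebra (ad ad_apply)

namespace LinearMap.IsAdjointPair

theorem symm_of_skew {R M : Type*} [CommRing R] [AddCommGroup M] [Module R M]
    {B : BilinForm R M} (hB : ∀ x y, B x y = -B y x) {F G : M →ₗ[R] M}
    (h : IsAdjointPair B B F G) : IsAdjointPair B B G F := fun u v => by
  rw [hB, ← h, hB, neg_neg]

variable {K V : Type*} [Field K] [AddCommGroup V] [Module K V] [FiniteDimensional K V]
  {B : BilinForm K V}

theorem trace_eq {F G : V →ₗ[K] V} (h : IsAdjointPair B B F G) (hB : B.Nondegenerate) :
    trace K V F = trace K V G := by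
  have hconj : (B.toDual hB).conj F = Module.Dual.transpose G := by
    ext f v
    obtain ⟨u, rfl⟩ := (B.toDual hB).surjective f
    simp [LinearEquiv.conj_apply, Module.Dual.transpose_apply, BilinForm.toDual_def, h u v]
  rw [← trace_conj' F (B.toDual hB), hconj, trace_transpose']

theorem trace_comp_eq {F G F' G' : V →ₗ[K] V} (h : IsAdjointPair B B F G)
    (h' : IsAdjointPair B B F' G') (hB : B.Nondegenerate) :
    trace K V (F ∘ₗ F') = trace K V (G ∘ₗ G') := by
  rw [trace_eq (F := F ∘ₗ F') (G := G' ∘ₗ G) (h'.comp h) hB, trace_comp_comm']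

end LinearMap.IsAdjointPair

theorem apply_lie_of_cocycle {R g : Type*} [CommRing R] [LieRing g] [LieAlgebra R g]
    {ω : BilinForm R g} (hskew : ∀ x y : g, ω x y = -ω y x)
    (hcocycle : ∀ x y z : g, ω ⁅x, y⁆ z + ω ⁅z, x⁆ y + ω ⁅y, z⁆ x = 0) (x y z : g) :
    ω x ⁅y, z⁆ = ω ⁅x, y⁆ z + ω y ⁅x, z⁆ := by
  have hzx : ω ⁅z, x⁆ y = ω y ⁅x, z⁆ := by rw [hskew, ← lie_skew, map_neg, neg_neg]
  linear_combination (hcocycle x y z).symm + hzx + hskew ⁅y, z⁆ x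

/-- properties of L^{0,1} and R^{0,1} on a symplectic Lie algebra:
(i) ω(R_x y, z) = ω(y, R_x z); (ii) tr(L_x ∘ L_y) = tr(ad_x ∘ ad_y);
(iii) tr(R_x ∘ R_y) = 2 tr(ad_x ∘ ad_y) + 2 tr(ad_x ∘ (ad_y)^*). -/
theorem stmt12 {g : Type*} [LieRing g] [LieAlgebra ℝ g] [Module.Finite ℝ g]
    (ω : g →ₗ[ℝ] g →ₗ[ℝ] ℝ)
    (hskew : ∀ x y : g, ω x y = - ω y x)
    (hnondeg : ∀ x : g, (∀ y : g, ω x y = 0) → x = 0)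
    (hcocycle : ∀ x y z : g, ω ⁅x, y⁆ z + ω ⁅z, x⁆ y + ω ⁅y, z⁆ x = 0)
    (L01 : g →ₗ[ℝ] g →ₗ[ℝ] g)
    (hLdef : ∀ x y z : g, ω (L01 x y) z = - ω y ⁅x, z⁆)
    (A : g → (g →ₗ[ℝ] g))
    (hA : ∀ y u v : g, ω ((A y) u) v = ω u ⁅y, v⁆) :
    (∀ x y z : g, ω (L01 y x) z = ω y (L01 z x)) ∧
    (∀ x y : g, LinearMap.trace ℝ g ((L01 x) ∘ₗ (L01 y)) =
      LinearMap.trace ℝ g ((LieAlgebra.ad ℝ g x) ∘ₗ (LieAlgebra.ad ℝ g y))) ∧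
    (∀ x y : g, LinearMap.trace ℝ g ((L01.flip x) ∘ₗ (L01.flip y)) =
      2 * LinearMap.trace ℝ g ((LieAlgebra.ad ℝ g x) ∘ₗ (LieAlgebra.ad ℝ g y)) +
      2 * LinearMap.trace ℝ g ((LieAlgebra.ad ℝ g x) ∘ₗ (A y))) := by
  have hω : BilinForm.Nondegenerate ω :=
    ⟨hnondeg, fun y hy => hnondeg y fun x => by rw [hskew, hy, neg_zero]⟩
  have hA_ad (y : g) : IsAdjointPair ω ω (A y) (ad ℝ g y) := hA y
  have had_A (y : g) : IsAdjointPair ω ω (ad ℝ g y) (A y) := (hA_ad y).symm_of_skew hskew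
  have hL (x : g) : L01 x = -A x :=
    BilinForm.isAdjointPair_unique_of_nondegenerate ω hω (-ad ℝ g x) _ _
      (fun y z => by simp only [hLdef, LinearMap.neg_apply, ad_apply, map_neg])
      (fun y z => by simp only [hA, LinearMap.neg_apply, ad_apply, map_neg])
  have hR (x : g) : L01.flip x = -(ad ℝ g x + A x) := by
    ext y
    refine LinearMap.ker_eq_bot.mp hω.ker_eq_bot (LinearMap.ext fun z => ?_)
    simp only [LinearMap.flip_apply, hL, LinearMap.neg_apply, LinearMap.add_apply, ad_apply,
      map_neg, map_add, hA]
    rw [apply_lie_of_cocycle hskew hcocycle x y z]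
  have htrAA (x y : g) : trace ℝ g (A x ∘ₗ A y) = trace ℝ g (ad ℝ g x ∘ₗ ad ℝ g y) :=
    (hA_ad x).trace_comp_eq (hA_ad y) hω
  have htrAad (x y : g) : trace ℝ g (A x ∘ₗ ad ℝ g y) = trace ℝ g (ad ℝ g x ∘ₗ A y) :=
    (hA_ad x).trace_comp_eq (had_A y) hω
  refine ⟨fun x y z => ?_, fun x y => ?_, fun x y => ?_⟩
  · rw [hLdef, hskew y, hLdef, ← lie_skew y z, map_neg, neg_neg]
  · rw [hL, hL, LinearMap.neg_comp, LinearMap.comp_neg, neg_neg, htrAA]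
  · rw [hR, hR, LinearMap.neg_comp, LinearMap.comp_neg, neg_neg, LinearMap.add_comp,
      LinearMap.comp_add, LinearMap.comp_add, map_add, map_add, map_add, htrAA, htrAad]
    ring
end

section
/- Let (g, ω) be a symplectic Lie algebra and define L^s_x(y) = (1/3)(L^{0,1}_x(y) + [x,y]), where L^{0,1} is the canonical left-symmetric product defined by ω(L^{0,1}_x(y), z) = −ω(y, [x,z]). Then L^s is torsion-free and symplectic: L^s_x y − L^s_y x = [x,y], and ω(L^s_x(y), z) + ω(y, L^s_x(z)) = 0 for all x, y, z ∈ g. -/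
/-!
`L^{0,1}_x + ad_x` is `ω`-skew for every `x`: the defining identity of `L^{0,1}` says precisely that
`L^{0,1}_x` is minus the `ω`-transpose of `ad_x`. Hence so is its multiple `L^s_x`. The cocycle
condition together with nondegeneracy gives `L^{0,1}_x y - L^{0,1}_y x = [x,y]`, and adding the
torsion `2[x,y]` of the bracket term and dividing by `3` shows that `L^s` is torsion-free.
-/

section SymplecticLieAlgebra

variable {R g : Type*} [CommRing R] [LieRing g] [LieAlgebra R g]
  {ω : g →ₗ[R] g →ₗ[R] R} {L : g →ₗ[R] g →ₗ[R] g}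

theorem form_apply_leftSymmetric_right (hskew : ∀ x y : g, ω x y = -ω y x)
    (hL : ∀ x y z : g, ω (L x y) z = -ω y ⁅x, z⁆) (x y z : g) :
    ω y (L x z) = -ω ⁅x, y⁆ z := by
  rw [hskew, hL, hskew z, neg_neg]

theorem form_leftSymmetric_add_lie_skew (hskew : ∀ x y : g, ω x y = -ω y x)
    (hL : ∀ x y z : g, ω (L x y) z = -ω y ⁅x, z⁆) (x y z : g) :
    ω (L x y + ⁅x, y⁆) z + ω y (L x z + ⁅x, z⁆) = 0 := by
  simp only [map_add, LinearMap.add_apply]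
  rw [hL, form_apply_leftSymmetric_right hskew hL]
  ring

theorem form_lie_left_of_cocycle (hskew : ∀ x y : g, ω x y = -ω y x)
    (hcocycle : ∀ x y z : g, ω ⁅x, y⁆ z + ω ⁅z, x⁆ y + ω ⁅y, z⁆ x = 0) (x y z : g) :
    ω ⁅x, y⁆ z = -ω y ⁅x, z⁆ + ω x ⁅y, z⁆ := by
  have hzx : ω ⁅z, x⁆ y = ω y ⁅x, z⁆ := by
    rw [← lie_skew, map_neg, LinearMap.neg_apply, hskew, neg_neg]
  linear_combination hcocycle x y z - hzx - hskew ⁅y, z⁆ x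

theorem leftSymmetric_sub_swap_eq_lie (hskew : ∀ x y : g, ω x y = -ω y x)
    (hnondeg : ∀ x : g, (∀ y : g, ω x y = 0) → x = 0)
    (hcocycle : ∀ x y z : g, ω ⁅x, y⁆ z + ω ⁅z, x⁆ y + ω ⁅y, z⁆ x = 0)
    (hL : ∀ x y z : g, ω (L x y) z = -ω y ⁅x, z⁆) (x y : g) :
    L x y - L y x = ⁅x, y⁆ := by
  refine sub_eq_zero.mp (hnondeg _ fun z => ?_)
  simp only [map_sub, LinearMap.sub_apply]
  rw [hL, hL, form_lie_left_of_cocycle hskew hcocycle]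
  ring

end SymplecticLieAlgebra

theorem stmt13_general {g : Type*} [LieRing g] [LieAlgebra ℝ g]
    (ω : g →ₗ[ℝ] g →ₗ[ℝ] ℝ)
    (hskew : ∀ x y : g, ω x y = - ω y x)
    (hnondeg : ∀ x : g, (∀ y : g, ω x y = 0) → x = 0)
    (hcocycle : ∀ x y z : g, ω ⁅x, y⁆ z + ω ⁅z, x⁆ y + ω ⁅y, z⁆ x = 0)
    (L01 : g →ₗ[ℝ] g →ₗ[ℝ] g)
    (hLdef : ∀ x y z : g, ω (L01 x y) z = - ω y ⁅x, z⁆)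
    (Ls : g →ₗ[ℝ] g →ₗ[ℝ] g)
    (hLs : ∀ x y : g, Ls x y = (1/3 : ℝ) • (L01 x y + ⁅x, y⁆)) :
    (∀ x y : g, Ls x y - Ls y x = ⁅x, y⁆) ∧
    (∀ x y z : g, ω (Ls x y) z + ω y (Ls x z) = 0) := by
  refine ⟨fun x y => ?_, fun x y z => ?_⟩
  · calc Ls x y - Ls y x = (1/3 : ℝ) • ((L01 x y - L01 y x) + (2 : ℝ) • ⁅x, y⁆) := by
          rw [hLs, hLs, ← lie_skew y x]
          module
      _ = ⁅x, y⁆ := by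
          rw [leftSymmetric_sub_swap_eq_lie hskew hnondeg hcocycle hLdef]
          module
  · rw [hLs, hLs, map_smul, map_smul, LinearMap.smul_apply, smul_eq_mul, smul_eq_mul, ← mul_add,
      form_leftSymmetric_add_lie_skew hskew hLdef, mul_zero]

/-- L^s = (1/3)(L^{0,1} + ad) is torsion-free and symplectic. -/
theorem stmt13 {g : Type*} [LieRing g] [LieAlgebra ℝ g] [Module.Finite ℝ g]
    (ω : g →ₗ[ℝ] g →ₗ[ℝ] ℝ)
    (hskew : ∀ x y : g, ω x y = - ω y x)
    (hnondeg : ∀ x : g, (∀ y : g, ω x y = 0) → x = 0)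
    (hcocycle : ∀ x y z : g, ω ⁅x, y⁆ z + ω ⁅z, x⁆ y + ω ⁅y, z⁆ x = 0)
    (L01 : g →ₗ[ℝ] g →ₗ[ℝ] g)
    (hLdef : ∀ x y z : g, ω (L01 x y) z = - ω y ⁅x, z⁆)
    (Ls : g →ₗ[ℝ] g →ₗ[ℝ] g)
    (hLs : ∀ x y : g, Ls x y = (1/3 : ℝ) • (L01 x y + ⁅x, y⁆)) :
    (∀ x y : g, Ls x y - Ls y x = ⁅x, y⁆) ∧
    (∀ x y z : g, ω (Ls x y) z + ω y (Ls x z) = 0) :=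
  stmt13_general ω hskew hnondeg hcocycle L01 hLdef Ls hLs
end

section
/- Let (g, ω) be a symplectic Lie algebra, L^{0,1} the canonical left-symmetric product (ω(L^{0,1}_x(y), z) = −ω(y, [x,z])), R^{0,1}_x(y) = L^{0,1}_y(x), and L^s = (1/3)(L^{0,1} + ad). Then the curvature K^s(x,y) := [L^s_x, L^s_y] − L^s_{[x,y]} equals (1/9){R^{0,1}_{[x,y]} − [R^{0,1}_x, R^{0,1}_y] − 2·L^{0,1}_{[x,y]}} for all x, y ∈ g. -/
/-!
Nondegeneracy of `ω` reduces the torsion-freeness `⁅x, y⁆ = L^{0,1}_x y - L^{0,1}_y x` to the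
cocycle identity and the flatness `[L^{0,1}_x, L^{0,1}_y] = L^{0,1}_{⁅x, y⁆}` to the Jacobi
identity. Together they say that `L^{0,1}` is left-symmetric, and once every bracket is written
through `L^{0,1}` the curvature formula is a linear combination of three instances of
left-symmetry.
-/

section Symplectic

variable {R g : Type*} [CommRing R] [LieRing g] [LieAlgebra R g]
  {ω : g →ₗ[R] g →ₗ[R] R} {L : g →ₗ[R] g →ₗ[R] g}

theorem LinearMap.SeparatingLeft.eq_of_apply_eq (hω : ω.SeparatingLeft) {v w : g}
    (h : ∀ u, ω v u = ω w u) : v = w :=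
  LinearMap.ker_eq_bot.mp (LinearMap.separatingLeft_iff_ker_eq_bot.mp hω) (LinearMap.ext h)

theorem lie_eq_sub_of_symplectic (hskew : ∀ x y, ω x y = -ω y x) (hω : ω.SeparatingLeft)
    (hcocycle : ∀ x y z, ω ⁅x, y⁆ z + ω ⁅z, x⁆ y + ω ⁅y, z⁆ x = 0)
    (hL : ∀ x y z, ω (L x y) z = -ω y ⁅x, z⁆) (a b : g) :
    ⁅a, b⁆ = L a b - L b a := by
  refine hω.eq_of_apply_eq fun u ↦ ?_
  have hcoc := hcocycle a b u
  rw [← lie_skew u a, map_neg, LinearMap.neg_apply] at hcoc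
  rw [map_sub, LinearMap.sub_apply, hL, hL, hskew b, hskew a]
  linear_combination hcoc

theorem lie_comp_sub_eq_lie_of_symplectic (hω : ω.SeparatingLeft)
    (hL : ∀ x y z, ω (L x y) z = -ω y ⁅x, z⁆) (a b c : g) :
    L a (L b c) - L b (L a c) = L ⁅a, b⁆ c := by
  refine hω.eq_of_apply_eq fun u ↦ ?_
  rw [map_sub, LinearMap.sub_apply, hL, hL, hL, hL, hL, lie_lie, map_sub]
  ring

end Symplectic

theorem curvature_eq_of_leftSymmetric {K g : Type*} [Field K] [CharZero K] [LieRing g] [LieAlgebra K g]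
    (L Ls : g →ₗ[K] g →ₗ[K] g)
    (htorsion : ∀ a b : g, ⁅a, b⁆ = L a b - L b a)
    (hleftSymm : ∀ a b c : g, L a (L b c) - L b (L a c) = L (L a b) c - L (L b a) c)
    (hLs : ∀ x y : g, Ls x y = (1/3 : K) • (L x y + ⁅x, y⁆)) (x y z : g) :
    Ls x (Ls y z) - Ls y (Ls x z) - Ls ⁅x, y⁆ z =
      (1/9 : K) • (L z ⁅x, y⁆ - (L (L z y) x - L (L z x) y) - (2 : K) • L ⁅x, y⁆ z) := by
  simp only [hLs, htorsion, map_add, map_sub, map_smul, LinearMap.add_apply,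
    LinearMap.sub_apply, LinearMap.smul_apply, smul_add, smul_sub]
  linear_combination (norm := module) (4/9 : K) • hleftSymm x y z
    - (2/9 : K) • hleftSymm x z y + (2/9 : K) • hleftSymm y z x

theorem stmt14_general {g : Type*} [LieRing g] [LieAlgebra ℝ g]
    (ω : g →ₗ[ℝ] g →ₗ[ℝ] ℝ)
    (hskew : ∀ x y : g, ω x y = - ω y x)
    (hnondeg : ∀ x : g, (∀ y : g, ω x y = 0) → x = 0)
    (hcocycle : ∀ x y z : g, ω ⁅x, y⁆ z + ω ⁅z, x⁆ y + ω ⁅y, z⁆ x = 0)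
    (L01 : g →ₗ[ℝ] g →ₗ[ℝ] g)
    (hLdef : ∀ x y z : g, ω (L01 x y) z = - ω y ⁅x, z⁆)
    (Ls : g →ₗ[ℝ] g →ₗ[ℝ] g)
    (hLs : ∀ x y : g, Ls x y = (1/3 : ℝ) • (L01 x y + ⁅x, y⁆)) :
    ∀ x y z : g,
      Ls x (Ls y z) - Ls y (Ls x z) - Ls ⁅x, y⁆ z =
        (1/9 : ℝ) • (L01 z ⁅x, y⁆ - (L01 (L01 z y) x - L01 (L01 z x) y)
          - (2 : ℝ) • L01 ⁅x, y⁆ z) := by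
  have htorsion := lie_eq_sub_of_symplectic hskew hnondeg hcocycle hLdef
  have hleftSymm : ∀ a b c : g,
      L01 a (L01 b c) - L01 b (L01 a c) = L01 (L01 a b) c - L01 (L01 b a) c := fun a b c ↦ by
    rw [lie_comp_sub_eq_lie_of_symplectic hnondeg hLdef, htorsion, map_sub,
      LinearMap.sub_apply]
  exact curvature_eq_of_leftSymmetric L01 Ls htorsion hleftSymm hLs

/-- the curvature of the natural symplectic connection of a symplectic
Lie group: K^s(x,y) = (1/9)(R^{0,1}_{[x,y]} - [R^{0,1}_x, R^{0,1}_y] - 2 L^{0,1}_{[x,y]}). -/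
theorem stmt14 {g : Type*} [LieRing g] [LieAlgebra ℝ g] [Module.Finite ℝ g]
    (ω : g →ₗ[ℝ] g →ₗ[ℝ] ℝ)
    (hskew : ∀ x y : g, ω x y = - ω y x)
    (hnondeg : ∀ x : g, (∀ y : g, ω x y = 0) → x = 0)
    (hcocycle : ∀ x y z : g, ω ⁅x, y⁆ z + ω ⁅z, x⁆ y + ω ⁅y, z⁆ x = 0)
    (L01 : g →ₗ[ℝ] g →ₗ[ℝ] g)
    (hLdef : ∀ x y z : g, ω (L01 x y) z = - ω y ⁅x, z⁆)
    (Ls : g →ₗ[ℝ] g →ₗ[ℝ] g)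
    (hLs : ∀ x y : g, Ls x y = (1/3 : ℝ) • (L01 x y + ⁅x, y⁆)) :
    ∀ x y z : g,
      Ls x (Ls y z) - Ls y (Ls x z) - Ls ⁅x, y⁆ z =
        (1/9 : ℝ) • (L01 z ⁅x, y⁆ - (L01 (L01 z y) x - L01 (L01 z x) y)
          - (2 : ℝ) • L01 ⁅x, y⁆ z) :=
  stmt14_general ω hskew hnondeg hcocycle L01 hLdef Ls hLs
end

section
/- Let (g, ω) be a symplectic Lie algebra with u ∈ g the unique vector satisfying ω(u, x) = tr(ad_x) for all x. The Ricci curvature of the natural symplectic connection, ric^s(x,y) := tr(z ↦ K^s(x,z)y) with K^s(x,y) = [L^s_x, L^s_y] − L^s_{[x,y]} and L^s = (1/3)(L^{0,1} + ad), is given by ric^s(x,y) = (1/9){κ(x,y) + ω(x, [u, y])}, where κ is the Killing form of g. -/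
/-! The canonical product `L = L^{0,1}` makes `L_x` the `ω`-adjoint of `-ad_x`; the cocycle identity
makes it torsion-free (`L_x y - L_y x = [x, y]`) and a representation, i.e. left-symmetric. Adjoint
maps for a nondegenerate form have equal traces, which gives `tr L_x = -tr ad_x`,
`tr (L_x L_y) = κ(x, y)` and `tr (L_y ad_x) = tr (L_x ad_y)`. Left-symmetry, written for the right
multiplications `R = L - ad`, reads `R_{L_x y} = R_y R_x + [L_x, R_y]`; taking traces yields
`tr (L_x ad_y) = κ(x, y) + tr ad_{L_x y}`, and `tr ad_{L_x y} = -ω(x, [u, y])` by the cocycle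
identity. Since `L^s_x = (L_x + ad_x)/3` and the right multiplication by `y` for `L^s` is `(L_y - 2 ad_y)/3`,
the Ricci trace is a linear combination of these quantities. -/

open LinearMap (trace)
open LieAlgebra (ad)

theorem LinearMap.Nondegenerate.trace_eq_of_isAdjointPair {K V : Type*} [Field K]
    [AddCommGroup V] [Module K V] [FiniteDimensional K V] {B : V →ₗ[K] V →ₗ[K] K}
    (hB : B.Nondegenerate) {f f' : Module.End K V} (h : IsAdjointPair B B f f') :
    trace K V f = trace K V f' := by
  -- `B` identifies `V` with its dual, and turns `f` into the transpose of `f'`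
  let e := LinearMap.BilinForm.toDual B hB
  have hconj : e.conj f = Module.Dual.transpose f' := by
    ext φ t
    obtain ⟨z, rfl⟩ := e.surjective φ
    simpa [e, LinearEquiv.conj_apply, BilinForm.toDual_def, Module.Dual.transpose_apply]
      using h z t
  rw [← LinearMap.trace_conj' f e, hconj, LinearMap.trace_transpose']

theorem LieAlgebra.trace_ad_lie (K : Type*) {g : Type*} [CommRing K] [LieRing g] [LieAlgebra K g]
    (p q : g) : trace K g (ad K g ⁅p, q⁆) = 0 := by
  have h : ad K g ⁅p, q⁆ = ad K g p * ad K g q - ad K g q * ad K g p := by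
    ext z
    exact lie_lie p q z
  rw [h, map_sub, LinearMap.trace_mul_comm, sub_self]

theorem LinearMap.SeparatingLeft.injective {R M N : Type*} [CommRing R] [AddCommGroup M]
    [Module R M] [AddCommGroup N] [Module R N] {B : M →ₗ[R] N →ₗ[R] R} (hB : B.SeparatingLeft) :
    Function.Injective B :=
  LinearMap.ker_eq_bot.mp (LinearMap.separatingLeft_iff_ker_eq_bot.mp hB)

namespace LeftSymmetric

variable {K g : Type*} [CommRing K] [LieRing g] [LieAlgebra K g] {L : g →ₗ[K] g →ₗ[K] g}

theorem flip_eq_sub_ad (hsub : ∀ p q, L p q - L q p = ⁅p, q⁆) (w : g) :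
    L.flip w = L w - ad K g w := by
  ext z
  simp only [LinearMap.flip_apply, LinearMap.sub_apply, LieAlgebra.ad_apply, ← hsub w z]
  abel

theorem flip_apply_eq (hsub : ∀ p q, L p q - L q p = ⁅p, q⁆)
    (hrep : ∀ p q, L ⁅p, q⁆ = L p ∘ₗ L q - L q ∘ₗ L p) (x y : g) :
    L.flip (L x y) = L.flip y ∘ₗ L.flip x + (L x ∘ₗ L.flip y - L.flip y ∘ₗ L x) := by
  ext z
  have h := congrArg (· y) (hrep z x)
  simp only [← hsub z x, map_sub, LinearMap.sub_apply, LinearMap.comp_apply] at h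
  simp only [LinearMap.flip_apply, LinearMap.add_apply, LinearMap.comp_apply,
    LinearMap.sub_apply]
  linear_combination (norm := abel) -h

end LeftSymmetric

namespace SymplecticLieAlgebra

open LeftSymmetric

variable {K g : Type*} [Field K] [LieRing g] [LieAlgebra K g]
  {ω : g →ₗ[K] g →ₗ[K] K} {L : g →ₗ[K] g →ₗ[K] g}

theorem sub_swap_eq_lie (hskew : ∀ x y, ω x y = -ω y x)
    (hcocycle : ∀ x y z, ω ⁅x, y⁆ z + ω ⁅z, x⁆ y + ω ⁅y, z⁆ x = 0) (hω : ω.SeparatingLeft)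
    (hL : ∀ x y z, ω (L x y) z = -ω y ⁅x, z⁆) (p q : g) : L p q - L q p = ⁅p, q⁆ :=
  hω.injective <| LinearMap.ext fun z => by
    have hzp : ω ⁅z, p⁆ q = ω q ⁅p, z⁆ := by rw [hskew, ← lie_skew, map_neg, neg_neg]
    simp only [map_sub, LinearMap.sub_apply, hL]
    linear_combination -hcocycle p q z + hzp + hskew ⁅q, z⁆ p

theorem apply_lie (hω : ω.SeparatingLeft) (hL : ∀ x y z, ω (L x y) z = -ω y ⁅x, z⁆) (p q : g) :
    L ⁅p, q⁆ = L p ∘ₗ L q - L q ∘ₗ L p := by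
  ext z
  refine hω.injective <| LinearMap.ext fun w => ?_
  simp only [LinearMap.sub_apply, LinearMap.comp_apply, map_sub, hL, lie_lie, neg_neg]
  ring

theorem isAdjointPair_apply_neg_ad (hL : ∀ x y z, ω (L x y) z = -ω y ⁅x, z⁆) (w : g) :
    LinearMap.IsAdjointPair ω ω (L w) ⇑(-ad K g w) := fun z t => by
  simp only [hL, LinearMap.neg_apply, LieAlgebra.ad_apply, map_neg]

theorem trace_ad_apply_eq (hskew : ∀ x y, ω x y = -ω y x)
    (hcocycle : ∀ x y z, ω ⁅x, y⁆ z + ω ⁅z, x⁆ y + ω ⁅y, z⁆ x = 0)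
    (hL : ∀ x y z, ω (L x y) z = -ω y ⁅x, z⁆) {u : g}
    (hu : ∀ x, ω u x = trace K g (ad K g x)) (x y : g) :
    trace K g (ad K g (L x y)) = -ω x ⁅u, y⁆ := by
  have hyx : ω ⁅y, x⁆ u = 0 := by rw [hskew, hu, LieAlgebra.trace_ad_lie, neg_zero]
  rw [← hu, hskew, hL, neg_neg]
  linear_combination hskew ⁅x, u⁆ y + hskew ⁅u, y⁆ x - hcocycle x u y + hyx

variable [FiniteDimensional K g]

theorem trace_eq_neg_trace_ad (hω : ω.Nondegenerate) (hL : ∀ x y z, ω (L x y) z = -ω y ⁅x, z⁆)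
    (w : g) :
    trace K g (L w) = -trace K g (ad K g w) := by
  rw [hω.trace_eq_of_isAdjointPair (isAdjointPair_apply_neg_ad hL w), map_neg]

theorem trace_comp_eq_killingForm (hω : ω.Nondegenerate)
    (hL : ∀ x y z, ω (L x y) z = -ω y ⁅x, z⁆) (x y : g) :
    trace K g (L x ∘ₗ L y) = killingForm K g x y := by
  have hadj : LinearMap.IsAdjointPair ω ω (L x ∘ₗ L y) (ad K g y ∘ₗ ad K g x) := fun z t => by
    simp only [LinearMap.comp_apply, LieAlgebra.ad_apply, hL, neg_neg]
  rw [hω.trace_eq_of_isAdjointPair hadj, LinearMap.trace_comp_comm', ← killingForm_apply_apply]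

theorem trace_comp_ad_comm (hskew : ∀ x y, ω x y = -ω y x) (hω : ω.Nondegenerate)
    (hL : ∀ x y z, ω (L x y) z = -ω y ⁅x, z⁆) (x y : g) :
    trace K g (L y ∘ₗ ad K g x) = trace K g (L x ∘ₗ ad K g y) := by
  refine hω.trace_eq_of_isAdjointPair fun z t => ?_
  simp only [LinearMap.comp_apply, LieAlgebra.ad_apply, hL]
  rw [hskew z, hL, neg_neg, hskew ⁅y, t⁆]

theorem trace_comp_ad_eq [NeZero (2 : K)] (hskew : ∀ x y, ω x y = -ω y x)
    (hcocycle : ∀ x y z, ω ⁅x, y⁆ z + ω ⁅z, x⁆ y + ω ⁅y, z⁆ x = 0) (hω : ω.Nondegenerate)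
    (hL : ∀ x y z, ω (L x y) z = -ω y ⁅x, z⁆) (x y : g) :
    trace K g (L x ∘ₗ ad K g y) = killingForm K g x y + trace K g (ad K g (L x y)) := by
  have hsub := sub_swap_eq_lie hskew hcocycle hω.1 hL
  have key := congrArg (trace K g) (flip_apply_eq hsub (apply_lie hω.1 hL) x y)
  simp only [flip_eq_sub_ad hsub, LinearMap.sub_comp, LinearMap.comp_sub, map_add, map_sub,
    trace_eq_neg_trace_ad hω hL, trace_comp_eq_killingForm hω hL, ← killingForm_apply_apply]
    at key
  have h2 : (2 : K) * (trace K g (L x ∘ₗ ad K g y) - (killingForm K g x y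
      + trace K g (ad K g (L x y)))) = 0 := by
    linear_combination key - LieModule.traceForm_comm K g g x y
      - trace_comp_ad_comm hskew hω hL x y
  exact sub_eq_zero.mp ((mul_eq_zero.mp h2).resolve_left two_ne_zero)

end SymplecticLieAlgebra

open LeftSymmetric SymplecticLieAlgebra

/-- the Ricci curvature of the natural symplectic connection of a
symplectic Lie algebra is ric^s(x,y) = (1/9)(κ(x,y) + ω(x,[u,y])). -/
theorem stmt15 {g : Type*} [LieRing g] [LieAlgebra ℝ g] [Module.Finite ℝ g]
    (ω : g →ₗ[ℝ] g →ₗ[ℝ] ℝ)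
    (hskew : ∀ x y : g, ω x y = - ω y x)
    (hnondeg : ∀ x : g, (∀ y : g, ω x y = 0) → x = 0)
    (hcocycle : ∀ x y z : g, ω ⁅x, y⁆ z + ω ⁅z, x⁆ y + ω ⁅y, z⁆ x = 0)
    (L01 : g →ₗ[ℝ] g →ₗ[ℝ] g)
    (hLdef : ∀ x y z : g, ω (L01 x y) z = - ω y ⁅x, z⁆)
    (Ls : g →ₗ[ℝ] g →ₗ[ℝ] g)
    (hLs : ∀ x y : g, Ls x y = (1/3 : ℝ) • (L01 x y + ⁅x, y⁆))
    (u : g) (hu : ∀ x : g, ω u x = LinearMap.trace ℝ g (LieAlgebra.ad ℝ g x)) :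
    ∀ x y : g,
      LinearMap.trace ℝ g
          ((Ls x) ∘ₗ (Ls.flip y) - Ls.flip (Ls x y) - (Ls.flip y) ∘ₗ (LieAlgebra.ad ℝ g x)) =
        (1/9 : ℝ) * (LinearMap.trace ℝ g ((LieAlgebra.ad ℝ g x) ∘ₗ (LieAlgebra.ad ℝ g y))
          + ω x ⁅u, y⁆) := by
  intro x y
  have hω : ω.Nondegenerate :=
    (LinearMap.IsRefl.nondegenerate_iff_separatingLeft fun a b h => by
      rw [hskew, h, neg_zero]).mpr hnondeg
  have hsub := sub_swap_eq_lie hskew hcocycle hω.1 hLdef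
  have hLs_left : Ls x = (1/3 : ℝ) • (L01 x + ad ℝ g x) := by
    ext z
    simp only [hLs, LinearMap.smul_apply, LinearMap.add_apply, LieAlgebra.ad_apply]
  have hLs_right (q : g) : Ls.flip q = (1/3 : ℝ) • (L01 q - (2 : ℝ) • ad ℝ g q) := by
    ext z
    have h := LinearMap.congr_fun (flip_eq_sub_ad hsub q) z
    simp only [LinearMap.flip_apply, LinearMap.sub_apply, LinearMap.smul_apply,
      LieAlgebra.ad_apply] at h ⊢
    rw [hLs, h, ← lie_skew]
    module
  rw [hLs x y, hLs_right, hLs_right, hLs_left]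
  simp only [LinearMap.smul_comp, LinearMap.comp_smul, LinearMap.add_comp,
    LinearMap.sub_comp, LinearMap.comp_sub, map_smul, map_sub, map_add, smul_eq_mul]
  rw [← killingForm_apply_apply, ← killingForm_apply_apply]
  linear_combination (1/9) * trace_comp_eq_killingForm hω hLdef x y
    + (1/9) * LinearMap.trace_comp_comm' (L01 y) (ad ℝ g x)
    - (2/9) * trace_comp_ad_comm hskew hω hLdef x y
    - (4/9) * trace_comp_ad_eq hskew hcocycle hω hLdef x y
    - (1/9) * trace_eq_neg_trace_ad hω hLdef (L01 x y)
    - (1/9) * trace_eq_neg_trace_ad hω hLdef ⁅x, y⁆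
    + (1/3) * LieAlgebra.trace_ad_lie ℝ x y
    - (1/9) * trace_ad_apply_eq hskew hcocycle hLdef hu x y
    - (2/3) * LieModule.traceForm_comm ℝ g g x y
end

section
/- Let (g, ω) be a symplectic Lie algebra with g unimodular (tr(ad_x) = 0 for all x). Then the Ricci curvature ric^s(x,y) = tr(z ↦ K^s(x,z)y) of the natural symplectic connection L^s = (1/3)(L^{0,1} + ad) vanishes identically if and only if the Killing form of g vanishes identically. -/
/-!
Write `R_y = L.flip y` for the right multiplications of `L = L^{0,1}`. The defining identity
`ω (L x y) z = -ω y ⁅x, z⁆` says that `-ad x` is the `ω`-adjoint of `L x`; since a map and its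
adjoint have the same trace, `tr (L x) = -tr (ad x) = 0`. The cocycle identity makes `L` torsion
free, `L x - R x = ad x`, so `R x` is `ω`-self-adjoint, and uniqueness of adjoints makes `L` flat,
`L ⁅x, y⁆ = ⁅L x, L y⁆`. Flatness gives `R x ∘ ad y = L y ∘ R x - R (L y x)`, while transposing
`L y ∘ R x` gives `tr (L y ∘ R x) = -tr (R x ∘ ad y)`; hence `tr (R x ∘ ad y) = 0`, and every mixed
trace in the expansion of `ric^s` along `L^s = (L + ad) / 3` vanishes, leaving `κ (x, y) / 9`.
-/

open LinearMap

theorem LinearMap.IsAdjointPair.trace_eq_s16 {K V : Type*} [Field K] [AddCommGroup V] [Module K V]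
    [FiniteDimensional K V] {B : V →ₗ[K] V →ₗ[K] K} (hB : B.SeparatingLeft) {f f' : V →ₗ[K] V}
    (h : IsAdjointPair B B f f') : trace K V f = trace K V f' := by
  let e := BilinForm.toDual B (.ofSeparatingLeft hB)
  have hconj : e.conj f = Module.Dual.transpose f' := by
    ext φ v
    obtain ⟨u, rfl⟩ := e.surjective φ
    simp [e, BilinForm.toDual_def, Module.Dual.transpose_apply, h u v]
  rw [← trace_conj' f e, hconj, trace_transpose']

theorem LinearMap.IsAdjointPair.eq_of_separatingLeft {R M : Type*} [CommRing R] [AddCommGroup M]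
    [Module R M] {B : M →ₗ[R] M →ₗ[R] R} (hB : B.SeparatingLeft) {f f' g : M →ₗ[R] M}
    (h : IsAdjointPair B B f g) (h' : IsAdjointPair B B f' g) : f = f' := by
  ext x
  rw [← sub_eq_zero]
  exact hB _ fun y => by rw [map_sub, sub_apply, h, h', sub_self]

namespace SymplecticLieAlgebra

open LieAlgebra

variable {K g : Type*} [Field K] [LieRing g] [LieAlgebra K g]

structure IsSymplecticForm (ω : g →ₗ[K] g →ₗ[K] K) : Prop where
  skew : ∀ x y, ω x y = -ω y x
  separatingLeft : ω.SeparatingLeft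
  cocycle : ∀ x y z, ω ⁅x, y⁆ z + ω ⁅z, x⁆ y + ω ⁅y, z⁆ x = 0

variable {ω : g →ₗ[K] g →ₗ[K] K} {L : g →ₗ[K] g →ₗ[K] g}

/- The hypothesis `hL` below is the defining identity `ω (L x y) z = -ω y ⁅x, z⁆` of the
left-symmetric product `L^{0,1}`, phrased as an adjoint pair. -/

theorem isAdjointPair_ad_neg (hskew : ∀ x y, ω x y = -ω y x)
    (hL : ∀ x, IsAdjointPair ω ω (L x) (-ad K g x : Module.End K g)) (x : g) :
    IsAdjointPair ω ω (ad K g x) (-L x : Module.End K g) := fun z w => by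
  have h := hL x w z
  simp only [ad_apply, LinearMap.neg_apply, map_neg] at h ⊢
  linear_combination hskew ⁅x, z⁆ w - h + hskew (L x w) z

theorem sub_flip_eq_lie (hω : IsSymplecticForm ω)
    (hL : ∀ x, IsAdjointPair ω ω (L x) (-ad K g x : Module.End K g)) (x z : g) :
    L x z - L z x = ⁅x, z⁆ := by
  rw [← sub_eq_zero]
  refine hω.separatingLeft _ fun w => ?_
  have hxz := hL x z w
  have hzx := hL z x w
  simp only [ad_apply, LinearMap.neg_apply, map_neg] at hxz hzx
  have hwx : ω ⁅w, x⁆ z = ω z ⁅x, w⁆ := by rw [hω.skew, ← lie_skew, map_neg, neg_neg]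
  simp only [map_sub, LinearMap.sub_apply]
  linear_combination hxz - hzx - hω.cocycle x z w + hwx + hω.skew ⁅z, w⁆ x

theorem flip_eq_sub_ad (hω : IsSymplecticForm ω)
    (hL : ∀ x, IsAdjointPair ω ω (L x) (-ad K g x : Module.End K g)) (x : g) :
    L.flip x = L x - ad K g x := by
  ext z
  simp [← sub_flip_eq_lie hω hL x z]

theorem isAdjointPair_flip (hω : IsSymplecticForm ω)
    (hL : ∀ x, IsAdjointPair ω ω (L x) (-ad K g x : Module.End K g)) (x : g) :
    IsAdjointPair ω ω (L.flip x) (L.flip x) := by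
  have h : IsAdjointPair ω ω (L x - ad K g x : Module.End K g)
      (-ad K g x - -L x : Module.End K g) :=
    (hL x).sub (isAdjointPair_ad_neg hω.skew hL x)
  rwa [neg_sub_neg, ← flip_eq_sub_ad hω hL] at h

theorem map_lie_eq_mul_sub_mul (hnondeg : ω.SeparatingLeft)
    (hL : ∀ x, IsAdjointPair ω ω (L x) (-ad K g x : Module.End K g)) (x y : g) :
    L ⁅x, y⁆ = L x * L y - L y * L x := by
  have had : (-ad K g ⁅x, y⁆ : Module.End K g) =
      -ad K g y * -ad K g x - -ad K g x * -ad K g y := by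
    ext z
    simp
  have h : IsAdjointPair ω ω (L x * L y - L y * L x) (-ad K g ⁅x, y⁆ : Module.End K g) := by
    rw [had]
    exact ((hL x).mul (hL y)).sub ((hL y).mul (hL x))
  exact IsAdjointPair.eq_of_separatingLeft hnondeg (hL ⁅x, y⁆) h

variable [FiniteDimensional K g]

theorem trace_left_eq_zero (hnondeg : ω.SeparatingLeft)
    (hL : ∀ x, IsAdjointPair ω ω (L x) (-ad K g x : Module.End K g))
    (hunimod : ∀ x : g, trace K g (ad K g x) = 0) (x : g) :
    trace K g (L x) = 0 := by
  rw [(hL x).trace_eq_s16 hnondeg, map_neg, hunimod, neg_zero]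

theorem trace_flip_eq_zero (hω : IsSymplecticForm ω)
    (hL : ∀ x, IsAdjointPair ω ω (L x) (-ad K g x : Module.End K g))
    (hunimod : ∀ x : g, trace K g (ad K g x) = 0) (x : g) :
    trace K g (L.flip x) = 0 := by
  rw [flip_eq_sub_ad hω hL, map_sub, trace_left_eq_zero hω.separatingLeft hL hunimod, hunimod,
    sub_zero]

theorem trace_flip_comp_ad_eq_zero [CharZero K] (hω : IsSymplecticForm ω)
    (hL : ∀ x, IsAdjointPair ω ω (L x) (-ad K g x : Module.End K g))
    (hunimod : ∀ x : g, trace K g (ad K g x) = 0) (x y : g) :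
    trace K g (L.flip x ∘ₗ ad K g y) = 0 := by
  have hflat : L.flip x ∘ₗ ad K g y = L y ∘ₗ L.flip x - L.flip (L y x) := by
    ext z
    simp [map_lie_eq_mul_sub_mul hω.separatingLeft hL]
  have hflat_trace : trace K g (L.flip x ∘ₗ ad K g y) = trace K g (L y ∘ₗ L.flip x) := by
    rw [hflat, map_sub, trace_flip_eq_zero hω hL hunimod, sub_zero]
  have hadj_trace := ((hL y).mul (isAdjointPair_flip hω hL x)).trace_eq_s16 hω.separatingLeft
  rw [Module.End.mul_eq_comp, Module.End.mul_eq_comp, comp_neg, map_neg] at hadj_trace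
  exact add_self_eq_zero.mp (by linear_combination hflat_trace + hadj_trace)

theorem trace_left_comp_flip_eq_zero [CharZero K] (hω : IsSymplecticForm ω)
    (hL : ∀ x, IsAdjointPair ω ω (L x) (-ad K g x : Module.End K g))
    (hunimod : ∀ x : g, trace K g (ad K g x) = 0) (x y : g) :
    trace K g (L x ∘ₗ L.flip y) = 0 := by
  have h := ((hL x).mul (isAdjointPair_flip hω hL y)).trace_eq_s16 hω.separatingLeft
  rwa [Module.End.mul_eq_comp, Module.End.mul_eq_comp, comp_neg, map_neg,
    trace_flip_comp_ad_eq_zero hω hL hunimod, neg_zero] at h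

theorem trace_left_comp_ad [CharZero K] (hω : IsSymplecticForm ω)
    (hL : ∀ x, IsAdjointPair ω ω (L x) (-ad K g x : Module.End K g))
    (hunimod : ∀ x : g, trace K g (ad K g x) = 0) (x y : g) :
    trace K g (L x ∘ₗ ad K g y) = trace K g (ad K g x ∘ₗ ad K g y) := by
  rw [← sub_add_cancel (L x) (ad K g x), ← flip_eq_sub_ad hω hL, add_comp, map_add,
    trace_flip_comp_ad_eq_zero hω hL hunimod, zero_add]

theorem trace_ricci_eq [CharZero K] (hω : IsSymplecticForm ω)
    (hL : ∀ x, IsAdjointPair ω ω (L x) (-ad K g x : Module.End K g))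
    (hunimod : ∀ x : g, trace K g (ad K g x) = 0) {Ls : g →ₗ[K] g →ₗ[K] g}
    (hLs : ∀ x y, Ls x y = (1 / 3 : K) • (L x y + ⁅x, y⁆)) (x y : g) :
    trace K g (Ls x ∘ₗ Ls.flip y - Ls.flip (Ls x y) - Ls.flip y ∘ₗ ad K g x) =
      (1 / 9 : K) * trace K g (ad K g x ∘ₗ ad K g y) := by
  have hLs_left : Ls x = (1 / 3 : K) • (L x + ad K g x) := by
    ext z
    simp [hLs]
  have hLs_right (z : g) : Ls.flip z = (1 / 3 : K) • (L.flip z - ad K g z) := by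
    ext w
    simp [hLs, sub_eq_add_neg, -smul_neg, lie_skew]
  have htrace_right (z : g) : trace K g (Ls.flip z) = 0 := by
    rw [hLs_right, map_smul, map_sub, trace_flip_eq_zero hω hL hunimod, hunimod, sub_zero,
      smul_zero]
  rw [map_sub, map_sub, htrace_right, hLs_left, hLs_right]
  simp only [smul_comp, comp_smul, add_comp, comp_sub, sub_comp, map_smul, map_add, map_sub,
    smul_eq_mul, trace_left_comp_flip_eq_zero hω hL hunimod, trace_left_comp_ad hω hL hunimod,
    trace_flip_comp_ad_eq_zero hω hL hunimod]
  rw [trace_comp_comm' (L.flip y) (ad K g x), trace_flip_comp_ad_eq_zero hω hL hunimod,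
    trace_comp_comm' (ad K g x) (ad K g y)]
  ring

end SymplecticLieAlgebra

open SymplecticLieAlgebra

/-- on a unimodular symplectic Lie algebra, the natural symplectic
connection is Ricci-flat iff the Killing form vanishes. -/
theorem stmt16 {g : Type*} [LieRing g] [LieAlgebra ℝ g] [Module.Finite ℝ g]
    (ω : g →ₗ[ℝ] g →ₗ[ℝ] ℝ)
    (hskew : ∀ x y : g, ω x y = - ω y x)
    (hnondeg : ∀ x : g, (∀ y : g, ω x y = 0) → x = 0)
    (hcocycle : ∀ x y z : g, ω ⁅x, y⁆ z + ω ⁅z, x⁆ y + ω ⁅y, z⁆ x = 0)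
    (L01 : g →ₗ[ℝ] g →ₗ[ℝ] g)
    (hLdef : ∀ x y z : g, ω (L01 x y) z = - ω y ⁅x, z⁆)
    (Ls : g →ₗ[ℝ] g →ₗ[ℝ] g)
    (hLs : ∀ x y : g, Ls x y = (1/3 : ℝ) • (L01 x y + ⁅x, y⁆))
    (hunimod : ∀ x : g, LinearMap.trace ℝ g (LieAlgebra.ad ℝ g x) = 0) :
    (∀ x y : g,
      LinearMap.trace ℝ g
          ((Ls x) ∘ₗ (Ls.flip y) - Ls.flip (Ls x y) - (Ls.flip y) ∘ₗ (LieAlgebra.ad ℝ g x)) = 0) ↔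
    (∀ x y : g,
      LinearMap.trace ℝ g ((LieAlgebra.ad ℝ g x) ∘ₗ (LieAlgebra.ad ℝ g y)) = 0) := by
  have hω : IsSymplecticForm ω := ⟨hskew, hnondeg, hcocycle⟩
  have hL (x : g) : IsAdjointPair ω ω (L01 x) (-LieAlgebra.ad ℝ g x : Module.End ℝ g) :=
    fun y z => by rw [hLdef, LinearMap.neg_apply, LieAlgebra.ad_apply, map_neg]
  refine forall₂_congr fun x y => ?_
  rw [trace_ricci_eq hω hL hunimod hLs]
  simp
end

section
/- Let g = h ⊕ m with [h,m] ⊆ m, equipped with an ad(g)-invariant inner product ⟨·,·⟩ with m = h^⊥, and a nondegenerate skew ad(h)-invariant 2-cocycle ω on m. Let W : m → m be defined by ω(x,y) = ⟨W(x), y⟩. Then: (i) W is skew-symmetric for ⟨·,·⟩; (ii) [W, L^{1,0}_x] = L^{1,0}_{W(x)} for all x ∈ m, where L^{1,0}_x(y) = [x,y]_m. -/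
/-!
Skew-symmetry of `W` is the skew-symmetry of `ω` read through `ω x y = ⟨W x, y⟩`. For the
bracket identity, pair `W [x,y]_m - [x,Wy]_m - [Wx,y]_m` with `z ∈ m`: since `m = h^⊥`, the
projections can be dropped against elements of `m`, and invariance of `⟨·,·⟩` moves the brackets
onto `z`, turning the pairing into the cyclic sum of the cocycle identity for `ω`. It therefore
vanishes for every `z ∈ m`, and definiteness of `⟨·,·⟩` on `m` forces the element to be zero.
-/

section Bilinear

variable {R M : Type*} [CommRing R] [AddCommGroup M] [Module R M]

lemma bilin_apply_proj_right {B : M →ₗ[R] M →ₗ[R] R} {h m : Submodule R M} {pm : M →ₗ[R] M}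
    (hcod : Codisjoint h m) (horth : ∀ z ∈ m, ∀ a ∈ h, B z a = 0)
    (hpm_m : ∀ x ∈ m, pm x = x) (hpm_h : ∀ x ∈ h, pm x = 0) {z : M} (hz : z ∈ m) (u : M) :
    B z (pm u) = B z u := by
  obtain ⟨a, b, ha, hb, rfl⟩ := Submodule.codisjoint_iff_exists_add_eq.mp hcod u
  rw [map_add, hpm_h a ha, hpm_m b hb, zero_add, map_add, horth z hz a ha, zero_add]

lemma eq_zero_of_bilin_apply_eq_zero [PartialOrder R] {B : M →ₗ[R] M →ₗ[R] R}
    (hBpos : ∀ x : M, x ≠ 0 → 0 < B x x) {m : Submodule R M} {v : M} (hv : v ∈ m)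
    (hvm : ∀ z ∈ m, B v z = 0) : v = 0 := by
  by_contra hne
  exact (hBpos v hne).ne' (hvm v hv)

end Bilinear

section Cocycle

variable {R L : Type*} [CommRing R] [LieRing L] [LieAlgebra R L]
  {B ω : L →ₗ[R] L →ₗ[R] R} {m : Submodule R L} {pm W : L →ₗ[R] L}

lemma bilin_proj_lie_apply_eq (hBsymm : ∀ x y : L, B x y = B y x)
    (hBinv : ∀ z x y : L, B ⁅z, x⁆ y + B x ⁅z, y⁆ = 0)
    (hpmB : ∀ z ∈ m, ∀ u, B z (pm u) = B z u) (hpm_mem : ∀ x, pm x ∈ m)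
    (hWmem : ∀ x ∈ m, W x ∈ m) (hW : ∀ x ∈ m, ∀ y ∈ m, ω x y = B (W x) y)
    (x : L) {y z : L} (hy : y ∈ m) (hz : z ∈ m) :
    B (pm ⁅x, W y⁆) z = -ω y (pm ⁅x, z⁆) := by
  calc B (pm ⁅x, W y⁆) z = B z ⁅x, W y⁆ := by rw [hBsymm, hpmB z hz]
    _ = -B (W y) ⁅x, z⁆ := by rw [hBsymm (W y)]; linear_combination hBinv x z (W y)
    _ = -ω y (pm ⁅x, z⁆) := by rw [hW y hy _ (hpm_mem _), hpmB _ (hWmem y hy)]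

lemma bilin_W_proj_lie_sub_eq (hBsymm : ∀ x y : L, B x y = B y x)
    (hBinv : ∀ z x y : L, B ⁅z, x⁆ y + B x ⁅z, y⁆ = 0)
    (hpmB : ∀ z ∈ m, ∀ u, B z (pm u) = B z u) (hpm_mem : ∀ x, pm x ∈ m)
    (hskew : ∀ x ∈ m, ∀ y ∈ m, ω x y = - ω y x)
    (hWmem : ∀ x ∈ m, W x ∈ m) (hW : ∀ x ∈ m, ∀ y ∈ m, ω x y = B (W x) y)
    {x y z : L} (hx : x ∈ m) (hy : y ∈ m) (hz : z ∈ m) :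
    B (W (pm ⁅x, y⁆) - pm ⁅x, W y⁆ - pm ⁅W x, y⁆) z =
      ω (pm ⁅x, y⁆) z + ω (pm ⁅z, x⁆) y + ω (pm ⁅y, z⁆) x := by
  have hWterm : B (W (pm ⁅x, y⁆)) z = ω (pm ⁅x, y⁆) z := (hW _ (hpm_mem _) z hz).symm
  have hxterm := bilin_proj_lie_apply_eq hBsymm hBinv hpmB hpm_mem hWmem hW x hy hz
  have hyterm := bilin_proj_lie_apply_eq hBsymm hBinv hpmB hpm_mem hWmem hW y hx hz
  rw [← lie_skew, map_neg, map_neg, LinearMap.neg_apply] at hyterm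
  rw [← lie_skew z x, map_neg, map_neg, LinearMap.neg_apply]
  simp only [map_sub, LinearMap.sub_apply]
  linear_combination hWterm - hxterm + hyterm - hskew _ (hpm_mem _) x hx
    + hskew y hy _ (hpm_mem _)

end Cocycle

theorem stmt17_general {g : Type*} [LieRing g] [LieAlgebra ℝ g]
    (B : g →ₗ[ℝ] g →ₗ[ℝ] ℝ)
    (hBsymm : ∀ x y : g, B x y = B y x)
    (hBpos : ∀ x : g, x ≠ 0 → 0 < B x x)
    (hBinv : ∀ z x y : g, B ⁅z, x⁆ y + B x ⁅z, y⁆ = 0)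
    (h m : Submodule ℝ g)
    (hperp : ∀ x : g, x ∈ m ↔ ∀ u ∈ h, B x u = 0)
    (hcompl : IsCompl h m)
    (pm : g →ₗ[ℝ] g) (hpm_mem : ∀ x, pm x ∈ m)
    (hpm_m : ∀ x ∈ m, pm x = x) (hpm_h : ∀ x ∈ h, pm x = 0)
    (ω : g →ₗ[ℝ] g →ₗ[ℝ] ℝ)
    (hskew : ∀ x ∈ m, ∀ y ∈ m, ω x y = - ω y x)
    (hcocycle : ∀ x ∈ m, ∀ y ∈ m, ∀ z ∈ m,
      ω (pm ⁅x, y⁆) z + ω (pm ⁅z, x⁆) y + ω (pm ⁅y, z⁆) x = 0)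
    (W : g →ₗ[ℝ] g) (hWmem : ∀ x ∈ m, W x ∈ m)
    (hW : ∀ x ∈ m, ∀ y ∈ m, ω x y = B (W x) y) :
    (∀ x ∈ m, ∀ y ∈ m, B (W x) y = - B x (W y)) ∧
    (∀ x ∈ m, ∀ y ∈ m, W (pm ⁅x, y⁆) - pm ⁅x, W y⁆ = pm ⁅W x, y⁆) := by
  have hpmB : ∀ z ∈ m, ∀ u, B z (pm u) = B z u := fun z hz =>
    bilin_apply_proj_right hcompl.codisjoint (fun z hz => (hperp z).mp hz) hpm_m hpm_h hz
  refine ⟨fun x hx y hy => ?_, fun x hx y hy => ?_⟩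
  · rw [← hW x hx y hy, hskew x hx y hy, hW y hy x hx, hBsymm]
  · rw [← sub_eq_zero]
    refine eq_zero_of_bilin_apply_eq_zero hBpos
      (m.sub_mem (m.sub_mem (hWmem _ (hpm_mem _)) (hpm_mem _)) (hpm_mem _)) fun z hz => ?_
    rw [bilin_W_proj_lie_sub_eq hBsymm hBinv hpmB hpm_mem hskew hWmem hW hx hy hz]
    exact hcocycle x hx y hy z hz

/-- in the compact-type setting, W is skew-symmetric for the invariant
inner product, and [W, L^{1,0}_x] = L^{1,0}_{W(x)} on m. -/
theorem stmt17 {g : Type*} [LieRing g] [LieAlgebra ℝ g]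
    (B : g →ₗ[ℝ] g →ₗ[ℝ] ℝ)
    (hBsymm : ∀ x y : g, B x y = B y x)
    (hBpos : ∀ x : g, x ≠ 0 → 0 < B x x)
    (hBinv : ∀ z x y : g, B ⁅z, x⁆ y + B x ⁅z, y⁆ = 0)
    (h m : Submodule ℝ g)
    (hsub : ∀ u ∈ h, ∀ v ∈ h, ⁅u, v⁆ ∈ h)
    (hperp : ∀ x : g, x ∈ m ↔ ∀ u ∈ h, B x u = 0)
    (hcompl : IsCompl h m)
    (hbr : ∀ u ∈ h, ∀ x ∈ m, ⁅u, x⁆ ∈ m)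
    (pm : g →ₗ[ℝ] g) (hpm_mem : ∀ x, pm x ∈ m)
    (hpm_m : ∀ x ∈ m, pm x = x) (hpm_h : ∀ x ∈ h, pm x = 0)
    (ω : g →ₗ[ℝ] g →ₗ[ℝ] ℝ)
    (hskew : ∀ x ∈ m, ∀ y ∈ m, ω x y = - ω y x)
    (hnondeg : ∀ x ∈ m, (∀ y ∈ m, ω x y = 0) → x = 0)
    (hcocycle : ∀ x ∈ m, ∀ y ∈ m, ∀ z ∈ m,
      ω (pm ⁅x, y⁆) z + ω (pm ⁅z, x⁆) y + ω (pm ⁅y, z⁆) x = 0)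
    (hinvh : ∀ u ∈ h, ∀ x ∈ m, ∀ y ∈ m, ω ⁅u, x⁆ y + ω x ⁅u, y⁆ = 0)
    (W : g →ₗ[ℝ] g) (hWmem : ∀ x ∈ m, W x ∈ m)
    (hW : ∀ x ∈ m, ∀ y ∈ m, ω x y = B (W x) y) :
    (∀ x ∈ m, ∀ y ∈ m, B (W x) y = - B x (W y)) ∧
    (∀ x ∈ m, ∀ y ∈ m, W (pm ⁅x, y⁆) - pm ⁅x, W y⁆ = pm ⁅W x, y⁆) :=
  stmt17_general B hBsymm hBpos hBinv h m hperp hcompl pm hpm_mem hpm_m hpm_h ω hskew hcocycle W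
    hWmem hW
end

section
/- With the setup of a compact-type reductive decomposition (ad(g)-invariant inner product, m = h^⊥, ω nondegenerate skew 2-cocycle on m, W defined by ω(x,y) = ⟨W x, y⟩), if the endomorphism W anticommutes with every L^{1,0}_x (i.e., L^{1,0}_x ∘ W = −W ∘ L^{1,0}_x for all x ∈ m), then [m,m]_m = 0, i.e., [x,y]_m = 0 for all x, y ∈ m. -/
/-!
With `L x y = [x, y]_m`, anticommutation of `W` with `L x`, the ad-invariance of the inner
product and `ω(x, y) = ⟨W x, y⟩` show that every `L a` is `ω`-symmetric:
`ω(L a b, c) = ω(b, L a c)`. Combined with the skew-symmetry of `L` and of `ω`, this makes the three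
terms of the cocycle identity for `(x, y, z)` equal, so each vanishes: `ω(L x y, z) = 0` for all
`z ∈ m`, and nondegeneracy gives `L x y = 0`.
-/

theorem Submodule.sub_apply_mem_of_isCompl {R M : Type*} [Ring R] [AddCommGroup M] [Module R M]
    {h m : Submodule R M} (hcompl : IsCompl h m) (p : M →ₗ[R] M)
    (hp_m : ∀ x ∈ m, p x = x) (hp_h : ∀ x ∈ h, p x = 0) (x : M) : x - p x ∈ h := by
  obtain ⟨a, ha, b, hb, rfl⟩ :=
    Submodule.mem_sup.mp (hcompl.codisjoint.eq_top ▸ trivial : x ∈ h ⊔ m)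
  rwa [map_add, hp_h a ha, hp_m b hb, zero_add, add_sub_cancel_right]

theorem LinearMap.apply_proj_left_of_orthogonal {R M : Type*} [CommRing R] [AddCommGroup M]
    [Module R M] (B : M →ₗ[R] M →ₗ[R] R) {h m : Submodule R M}
    (horth : ∀ u ∈ h, ∀ c ∈ m, B u c = 0) (p : M →ₗ[R] M) (hp : ∀ x, x - p x ∈ h)
    (w : M) {c : M} (hc : c ∈ m) : B (p w) c = B w c := by
  have := horth _ (hp w) c hc
  rwa [map_sub, LinearMap.sub_apply, sub_eq_zero, eq_comm] at this

theorem omega_proj_lie_eq_of_anticomm {g : Type*} [LieRing g] [LieAlgebra ℝ g]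
    (B : g →ₗ[ℝ] g →ₗ[ℝ] ℝ) (hBsymm : ∀ x y : g, B x y = B y x)
    (hBinv : ∀ z x y : g, B ⁅z, x⁆ y + B x ⁅z, y⁆ = 0) (m : Submodule ℝ g) (pm : g →ₗ[ℝ] g)
    (hpm_mem : ∀ x, pm x ∈ m) (hB_pm : ∀ w : g, ∀ c ∈ m, B (pm w) c = B w c)
    (ω : g →ₗ[ℝ] g →ₗ[ℝ] ℝ) (W : g →ₗ[ℝ] g) (hWmem : ∀ x ∈ m, W x ∈ m)
    (hW : ∀ x ∈ m, ∀ y ∈ m, ω x y = B (W x) y)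
    (hanti : ∀ x ∈ m, ∀ y ∈ m, pm ⁅x, W y⁆ = - W (pm ⁅x, y⁆))
    {a b c : g} (ha : a ∈ m) (hb : b ∈ m) (hc : c ∈ m) :
    ω (pm ⁅a, b⁆) c = ω b (pm ⁅a, c⁆) := by
  have hWab : W (pm ⁅a, b⁆) = - pm ⁅a, W b⁆ := by rw [hanti a ha b hb, neg_neg]
  have hWb_pm : B (W b) (pm ⁅a, c⁆) = B (W b) ⁅a, c⁆ := by
    rw [hBsymm, hB_pm _ _ (hWmem b hb), hBsymm]
  calc ω (pm ⁅a, b⁆) c = - B ⁅a, W b⁆ c := by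
        rw [hW _ (hpm_mem _) c hc, hWab, map_neg, LinearMap.neg_apply, hB_pm _ _ hc]
    _ = B (W b) ⁅a, c⁆ := by linarith [hBinv a (W b) c]
    _ = ω b (pm ⁅a, c⁆) := by rw [hW b hb _ (hpm_mem _), hWb_pm]

theorem cocycle_term_eq_zero_of_symm {M : Type*} [AddCommGroup M] [Module ℝ M]
    (m : Submodule ℝ M) (ω : M →ₗ[ℝ] M →ₗ[ℝ] ℝ) (hskew : ∀ x ∈ m, ∀ y ∈ m, ω x y = - ω y x)
    (L : M → M → M) (hL_mem : ∀ a b, L a b ∈ m) (hL_skew : ∀ a b, L a b = - L b a)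
    (hcocycle : ∀ x ∈ m, ∀ y ∈ m, ∀ z ∈ m, ω (L x y) z + ω (L z x) y + ω (L y z) x = 0)
    (hsymm : ∀ a ∈ m, ∀ b ∈ m, ∀ c ∈ m, ω (L a b) c = ω b (L a c))
    {x y z : M} (hx : x ∈ m) (hy : y ∈ m) (hz : z ∈ m) : ω (L x y) z = 0 := by
  have rotate : ∀ a ∈ m, ∀ b ∈ m, ∀ c ∈ m, ω (L c a) b = ω (L b c) a := fun a ha b hb c hc => by
    rw [hsymm c hc a ha b hb, hskew a ha _ (hL_mem c b), hL_skew c b, map_neg,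
      LinearMap.neg_apply, neg_neg]
  have := hcocycle x hx y hy z hz
  rw [rotate x hx y hy z hz, rotate z hz x hx y hy] at this
  linarith

theorem stmt18_general {g : Type*} [LieRing g] [LieAlgebra ℝ g]
    (B : g →ₗ[ℝ] g →ₗ[ℝ] ℝ)
    (hBsymm : ∀ x y : g, B x y = B y x)
    (hBinv : ∀ z x y : g, B ⁅z, x⁆ y + B x ⁅z, y⁆ = 0)
    (h m : Submodule ℝ g)
    (hperp : ∀ x : g, x ∈ m ↔ ∀ u ∈ h, B x u = 0)
    (hcompl : IsCompl h m)
    (pm : g →ₗ[ℝ] g) (hpm_mem : ∀ x, pm x ∈ m)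
    (hpm_m : ∀ x ∈ m, pm x = x) (hpm_h : ∀ x ∈ h, pm x = 0)
    (ω : g →ₗ[ℝ] g →ₗ[ℝ] ℝ)
    (hskew : ∀ x ∈ m, ∀ y ∈ m, ω x y = - ω y x)
    (hnondeg : ∀ x ∈ m, (∀ y ∈ m, ω x y = 0) → x = 0)
    (hcocycle : ∀ x ∈ m, ∀ y ∈ m, ∀ z ∈ m,
      ω (pm ⁅x, y⁆) z + ω (pm ⁅z, x⁆) y + ω (pm ⁅y, z⁆) x = 0)
    (W : g →ₗ[ℝ] g) (hWmem : ∀ x ∈ m, W x ∈ m)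
    (hW : ∀ x ∈ m, ∀ y ∈ m, ω x y = B (W x) y)
    (hanti : ∀ x ∈ m, ∀ y ∈ m, pm ⁅x, W y⁆ = - W (pm ⁅x, y⁆)) :
    ∀ x ∈ m, ∀ y ∈ m, pm ⁅x, y⁆ = 0 := by
  have horth : ∀ u ∈ h, ∀ c ∈ m, B u c = 0 := fun u hu c hc => by
    rw [hBsymm]; exact (hperp c).mp hc u hu
  have hB_pm : ∀ w : g, ∀ c ∈ m, B (pm w) c = B w c := fun w c hc =>
    B.apply_proj_left_of_orthogonal horth pm
      (Submodule.sub_apply_mem_of_isCompl hcompl pm hpm_m hpm_h) w hc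
  have hsymm : ∀ a ∈ m, ∀ b ∈ m, ∀ c ∈ m, ω (pm ⁅a, b⁆) c = ω b (pm ⁅a, c⁆) :=
    fun _ ha _ hb _ hc => omega_proj_lie_eq_of_anticomm B hBsymm hBinv m pm hpm_mem hB_pm ω W
      hWmem hW hanti ha hb hc
  intro x hx y hy
  refine hnondeg _ (hpm_mem _) fun z hz => ?_
  exact cocycle_term_eq_zero_of_symm m ω hskew (fun a b => pm ⁅a, b⁆) (fun _ _ => hpm_mem _)
    (fun a b => by rw [← lie_skew, map_neg]) hcocycle hsymm hx hy hz

/-- if W anticommutes with every L^{1,0}_x, then [m,m]_m = 0. -/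
theorem stmt18 {g : Type*} [LieRing g] [LieAlgebra ℝ g]
    (B : g →ₗ[ℝ] g →ₗ[ℝ] ℝ)
    (hBsymm : ∀ x y : g, B x y = B y x)
    (hBpos : ∀ x : g, x ≠ 0 → 0 < B x x)
    (hBinv : ∀ z x y : g, B ⁅z, x⁆ y + B x ⁅z, y⁆ = 0)
    (h m : Submodule ℝ g)
    (hsub : ∀ u ∈ h, ∀ v ∈ h, ⁅u, v⁆ ∈ h)
    (hperp : ∀ x : g, x ∈ m ↔ ∀ u ∈ h, B x u = 0)
    (hcompl : IsCompl h m)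
    (hbr : ∀ u ∈ h, ∀ x ∈ m, ⁅u, x⁆ ∈ m)
    (pm : g →ₗ[ℝ] g) (hpm_mem : ∀ x, pm x ∈ m)
    (hpm_m : ∀ x ∈ m, pm x = x) (hpm_h : ∀ x ∈ h, pm x = 0)
    (ω : g →ₗ[ℝ] g →ₗ[ℝ] ℝ)
    (hskew : ∀ x ∈ m, ∀ y ∈ m, ω x y = - ω y x)
    (hnondeg : ∀ x ∈ m, (∀ y ∈ m, ω x y = 0) → x = 0)
    (hcocycle : ∀ x ∈ m, ∀ y ∈ m, ∀ z ∈ m,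
      ω (pm ⁅x, y⁆) z + ω (pm ⁅z, x⁆) y + ω (pm ⁅y, z⁆) x = 0)
    (hinvh : ∀ u ∈ h, ∀ x ∈ m, ∀ y ∈ m, ω ⁅u, x⁆ y + ω x ⁅u, y⁆ = 0)
    (W : g →ₗ[ℝ] g) (hWmem : ∀ x ∈ m, W x ∈ m)
    (hW : ∀ x ∈ m, ∀ y ∈ m, ω x y = B (W x) y)
    (hWinj : ∀ x ∈ m, W x = 0 → x = 0)
    (hanti : ∀ x ∈ m, ∀ y ∈ m, pm ⁅x, W y⁆ = - W (pm ⁅x, y⁆)) :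
    ∀ x ∈ m, ∀ y ∈ m, pm ⁅x, y⁆ = 0 :=
  stmt18_general B hBsymm hBinv h m hperp hcompl pm hpm_mem hpm_m hpm_h ω hskew hnondeg hcocycle W
    hWmem hW hanti
end

section
/- In the 6-dimensional real Lie algebra r₆ with basis e₁,…,e₆ and nonzero brackets [e₁,e₅]=e₂, [e₂,e₅]=e₁, [e₃,e₅]=e₄, [e₄,e₅]=−e₃ (extended by skew-symmetry, all other brackets zero): r₆ is a solvable unimodular Lie algebra, ω := e₁*∧e₂* + e₃*∧e₄* + e₅*∧e₆* is a nondegenerate 2-cocycle on r₆, and the Killing form of r₆ vanishes identically. -/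
/-!
In the coordinates `xᵢ = eᵢ*(x)` the bracket is
`⁅x, y⁆ = (x₂y₅ - x₅y₂) e₁ + (x₁y₅ - x₅y₁) e₂ + (x₅y₄ - x₄y₅) e₃ + (x₃y₅ - x₅y₃) e₄`,
and everything is read off this formula. Every bracket has `e₅*`-coordinate zero, and two such
elements commute, so the derived algebra is abelian. Each `ad x` has zero diagonal. The only
diagonal entries of `ad x ∘ ad y` are `±x₅y₅`: `ad e₅` squares to `1` on `⟨e₁, e₂⟩` and to `-1`
on `⟨e₃, e₄⟩`, so they cancel.
-/

open Module LieAlgebra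

section

variable {R M g : Type*} [CommRing R]

theorem LinearMap.trace_eq_sum_coord [AddCommGroup M] [Module R M] {ι : Type*} [Fintype ι]
    [DecidableEq ι] (b : Basis ι R M) (f : M →ₗ[R] M) :
    trace R M f = ∑ i, b.coord i (f (b i)) := by
  simp [trace_eq_matrix_trace R b, Matrix.trace, LinearMap.toMatrix_apply]

noncomputable def omega [AddCommGroup M] [Module R M] (e : Basis (Fin 6) R M) (x y : M) : R :=
  (e.coord 0 x * e.coord 1 y - e.coord 1 x * e.coord 0 y) +
    (e.coord 2 x * e.coord 3 y - e.coord 3 x * e.coord 2 y) +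
    (e.coord 4 x * e.coord 5 y - e.coord 5 x * e.coord 4 y)

theorem omega_nondegenerate [AddCommGroup M] [Module R M] (e : Basis (Fin 6) R M) {x : M}
    (h : ∀ y, omega e x y = 0) : x = 0 := by
  refine e.forall_coord_eq_zero_iff.mp fun i => ?_
  fin_cases i
  · simpa [omega] using h (e 1)
  · simpa [omega] using h (e 0)
  · simpa [omega] using h (e 3)
  · simpa [omega] using h (e 2)
  · simpa [omega] using h (e 5)
  · simpa [omega] using h (e 4)

variable [LieRing g] [LieAlgebra R g]

-- The paper's `e₁, …, e₆` are `e 0, …, e 5`.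
structure IsR6Basis (e : Basis (Fin 6) R g) : Prop where
  lie_zero_four : ⁅e 0, e 4⁆ = e 1
  lie_one_four : ⁅e 1, e 4⁆ = e 0
  lie_two_four : ⁅e 2, e 4⁆ = e 3
  lie_three_four : ⁅e 3, e 4⁆ = -e 2
  lie_five_four : ⁅e 5, e 4⁆ = 0
  lie_eq_zero : ∀ i j, i ≠ 4 → j ≠ 4 → ⁅e i, e j⁆ = 0

namespace IsR6Basis

variable {e : Basis (Fin 6) R g}

theorem lie_eq (he : IsR6Basis e) (x y : g) : ⁅x, y⁆ =
    (e.coord 1 x * e.coord 4 y - e.coord 4 x * e.coord 1 y) • e 0 +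
    (e.coord 0 x * e.coord 4 y - e.coord 4 x * e.coord 0 y) • e 1 +
    (e.coord 4 x * e.coord 3 y - e.coord 3 x * e.coord 4 y) • e 2 +
    (e.coord 2 x * e.coord 4 y - e.coord 4 x * e.coord 2 y) • e 3 := by
  have lie_four_left : ∀ i, ⁅e 4, e i⁆ = -⁅e i, e 4⁆ := fun i => (lie_skew _ _).symm
  conv_lhs => rw [← e.sum_repr x, ← e.sum_repr y]
  simp only [Fin.sum_univ_six, add_lie, lie_add, smul_lie, lie_smul, lie_self, lie_four_left,
    he.lie_zero_four, he.lie_one_four, he.lie_two_four, he.lie_three_four, he.lie_five_four,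
    he.lie_eq_zero, ne_eq, Fin.reduceEq, not_false_eq_true, Basis.coord_apply]
  module

theorem coord_zero_lie (he : IsR6Basis e) (x y : g) :
    e.coord 0 ⁅x, y⁆ = e.coord 1 x * e.coord 4 y - e.coord 4 x * e.coord 1 y := by
  simp [he.lie_eq]

theorem coord_one_lie (he : IsR6Basis e) (x y : g) :
    e.coord 1 ⁅x, y⁆ = e.coord 0 x * e.coord 4 y - e.coord 4 x * e.coord 0 y := by
  simp [he.lie_eq]

theorem coord_two_lie (he : IsR6Basis e) (x y : g) :
    e.coord 2 ⁅x, y⁆ = e.coord 4 x * e.coord 3 y - e.coord 3 x * e.coord 4 y := by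
  simp [he.lie_eq]

theorem coord_three_lie (he : IsR6Basis e) (x y : g) :
    e.coord 3 ⁅x, y⁆ = e.coord 2 x * e.coord 4 y - e.coord 4 x * e.coord 2 y := by
  simp [he.lie_eq]

theorem coord_four_lie (he : IsR6Basis e) (x y : g) : e.coord 4 ⁅x, y⁆ = 0 := by
  simp [he.lie_eq]

theorem coord_five_lie (he : IsR6Basis e) (x y : g) : e.coord 5 ⁅x, y⁆ = 0 := by
  simp [he.lie_eq]

theorem derivedSeries_one_le_ker_coord_four (he : IsR6Basis e) :
    (derivedSeries R g 1).toSubmodule ≤ LinearMap.ker (e.coord 4) := by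
  rw [derivedSeries_def, derivedSeriesOfIdeal_succ, derivedSeriesOfIdeal_zero,
    LieSubmodule.lieIdeal_oper_eq_linear_span', Submodule.span_le]
  rintro _ ⟨x, -, y, -, rfl⟩
  exact he.coord_four_lie x y

theorem isSolvable (he : IsR6Basis e) : IsSolvable g := by
  refine IsSolvable.mk (R := R) (k := 2) ?_
  rw [derivedSeries_def, derivedSeriesOfIdeal_succ, ← derivedSeries_def,
    LieSubmodule.lie_eq_bot_iff]
  intro x hx y hy
  rw [he.lie_eq, he.derivedSeries_one_le_ker_coord_four hx,
    he.derivedSeries_one_le_ker_coord_four hy]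
  simp

theorem trace_ad (he : IsR6Basis e) (x : g) : LinearMap.trace R g (ad R g x) = 0 := by
  simp only [LinearMap.trace_eq_sum_coord e, Fin.sum_univ_six, ad_apply, he.coord_zero_lie,
    he.coord_one_lie, he.coord_two_lie, he.coord_three_lie, he.coord_four_lie, he.coord_five_lie]
  simp

theorem trace_ad_comp_ad (he : IsR6Basis e) (x y : g) :
    LinearMap.trace R g (ad R g x ∘ₗ ad R g y) = 0 := by
  simp only [LinearMap.trace_eq_sum_coord e, Fin.sum_univ_six, LinearMap.comp_apply, ad_apply,
    he.coord_zero_lie, he.coord_one_lie, he.coord_two_lie, he.coord_three_lie, he.coord_four_lie,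
    he.coord_five_lie]
  simp

theorem omega_cocycle (he : IsR6Basis e) (x y z : g) :
    omega e ⁅x, y⁆ z + omega e ⁅z, x⁆ y + omega e ⁅y, z⁆ x = 0 := by
  simp only [omega, he.coord_zero_lie, he.coord_one_lie, he.coord_two_lie, he.coord_three_lie,
    he.coord_four_lie, he.coord_five_lie]
  ring

end IsR6Basis

end

/-- the 6-dimensional Lie algebra r₆ with brackets
[e₁,e₅]=e₂, [e₂,e₅]=e₁, [e₃,e₅]=e₄, [e₄,e₅]=−e₃ (all others zero) is solvable and
unimodular, ω = e₁*∧e₂* + e₃*∧e₄* + e₅*∧e₆* is a nondegenerate 2-cocycle on it,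
and its Killing form vanishes identically. -/
theorem stmt19 {g : Type*} [LieRing g] [LieAlgebra ℝ g] (e : Module.Basis (Fin 6) ℝ g)
    (h15 : ⁅e 0, e 4⁆ = e 1) (h25 : ⁅e 1, e 4⁆ = e 0)
    (h35 : ⁅e 2, e 4⁆ = e 3) (h45 : ⁅e 3, e 4⁆ = - e 2)
    (h65 : ⁅e 5, e 4⁆ = 0)
    (hz : ∀ i j : Fin 6, i ≠ 4 → j ≠ 4 → ⁅e i, e j⁆ = 0) :
    LieAlgebra.IsSolvable g ∧
    (∀ x : g, LinearMap.trace ℝ g (LieAlgebra.ad ℝ g x) = 0) ∧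
    (∀ x : g, (∀ y : g,
        (e.coord 0 x * e.coord 1 y - e.coord 1 x * e.coord 0 y) +
        (e.coord 2 x * e.coord 3 y - e.coord 3 x * e.coord 2 y) +
        (e.coord 4 x * e.coord 5 y - e.coord 5 x * e.coord 4 y) = 0) → x = 0) ∧
    (∀ x y z : g,
        ((e.coord 0 ⁅x, y⁆ * e.coord 1 z - e.coord 1 ⁅x, y⁆ * e.coord 0 z) +
         (e.coord 2 ⁅x, y⁆ * e.coord 3 z - e.coord 3 ⁅x, y⁆ * e.coord 2 z) +
         (e.coord 4 ⁅x, y⁆ * e.coord 5 z - e.coord 5 ⁅x, y⁆ * e.coord 4 z)) +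
        ((e.coord 0 ⁅z, x⁆ * e.coord 1 y - e.coord 1 ⁅z, x⁆ * e.coord 0 y) +
         (e.coord 2 ⁅z, x⁆ * e.coord 3 y - e.coord 3 ⁅z, x⁆ * e.coord 2 y) +
         (e.coord 4 ⁅z, x⁆ * e.coord 5 y - e.coord 5 ⁅z, x⁆ * e.coord 4 y)) +
        ((e.coord 0 ⁅y, z⁆ * e.coord 1 x - e.coord 1 ⁅y, z⁆ * e.coord 0 x) +
         (e.coord 2 ⁅y, z⁆ * e.coord 3 x - e.coord 3 ⁅y, z⁆ * e.coord 2 x) +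
         (e.coord 4 ⁅y, z⁆ * e.coord 5 x - e.coord 5 ⁅y, z⁆ * e.coord 4 x)) = 0) ∧
    (∀ x y : g, LinearMap.trace ℝ g
        ((LieAlgebra.ad ℝ g x) ∘ₗ (LieAlgebra.ad ℝ g y)) = 0) := by
  have he : IsR6Basis e := ⟨h15, h25, h35, h45, h65, hz⟩
  exact ⟨he.isSolvable, he.trace_ad, fun _ => omega_nondegenerate e, he.omega_cocycle,
    he.trace_ad_comp_ad⟩
end
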